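/- arXiv:2006.10825 — 2 statements merged into one kernel-verified Lean document; each statement's English description precedes it below -/
import Mathlib

section
/- Let (X,G,m) be a dynamical system over a σ-compact locally compact abelian group G and (B_n) a Følner sequence in G. Then the set Bap(X,G,m) of points of X that are Besicovitch almost periodic and generic for m along (B_n) is a Borel measurable, G-invariant subset of X. -/
open MeasureTheory Filter Topology Set Pointwise

noncomputable section

namespace APPaper

/-- A subset `A` of `G` is relatively dense if there is a compact `K ⊆ G` with
`G = ⋃_{a ∈ A} (a + K)`. -/
def RelDense {G : Type*} [AddCommGroup G] [TopologicalSpace G] (A : Set G) : Prop :=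
  ∃ K : Set G, IsCompact K ∧ ∀ g : G, ∃ a ∈ A, g - a ∈ K

/-- A continuous character of `G`, i.e. a continuous homomorphism into the unit circle
(realized inside `ℂ`). -/
def IsChar {G : Type*} [AddCommGroup G] [TopologicalSpace G] (ξ : G → ℂ) : Prop :=
  Continuous ξ ∧ (∀ t, ‖ξ t‖ = 1) ∧ ∀ s t, ξ (s + t) = ξ s * ξ t

/-- `B` is a Følner sequence (of open, relatively compact, nonempty sets) for the
measure `μ` on `G`. -/
structure IsFolner {G : Type*} [AddCommGroup G] [TopologicalSpace G] [MeasurableSpace G]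
    (μ : Measure G) (B : ℕ → Set G) : Prop where
  isOpen : ∀ n, IsOpen (B n)
  nonempty : ∀ n, (B n).Nonempty
  relCompact : ∀ n, IsCompact (closure (B n))
  folner : ∀ t : G,
    Tendsto (fun n => (μ ((B n \ (t +ᵥ B n)) ∪ ((t +ᵥ B n) \ B n))).toReal / (μ (B n)).toReal)
      atTop (𝓝 0)

/-- The average `(1/|B n|) ∫_{B n} h` of a real valued function. -/
def avg {G : Type*} [MeasurableSpace G] (μ : Measure G) (B : ℕ → Set G) (n : ℕ)
    (h : G → ℝ) : ℝ :=
  (μ (B n)).toReal⁻¹ * ∫ t in B n, h t ∂μ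

/-- The average `(1/|B n|) ∫_{B n} h` of a complex valued function. -/
def avgC {G : Type*} [MeasurableSpace G] (μ : Measure G) (B : ℕ → Set G) (n : ℕ)
    (h : G → ℂ) : ℂ :=
  (μ (B n)).toReal⁻¹ • ∫ t in B n, h t ∂μ

/-- The upper mean `M̄(h) = limsup_n (1/|B n|) ∫_{B n} h` along the Følner sequence. -/
def upperMean {G : Type*} [MeasurableSpace G] (μ : Measure G) (B : ℕ → Set G) (h : G → ℝ) : ℝ :=
  Filter.limsup (fun n => avg μ B n h) Filter.atTop

/-- The upper density `Dens(A) = M̄(1_A)` of a subset of `G`. -/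
def upperDens {G : Type*} [MeasurableSpace G] (μ : Measure G) (B : ℕ → Set G) (A : Set G) : ℝ :=
  upperMean μ B (A.indicator fun _ => (1 : ℝ))

/-- `M̄_n(h) = sup_{r ∈ G} (1/|B n|) ∫_{B n + r} h`. -/
def supAvg {G : Type*} [AddCommGroup G] [MeasurableSpace G] (μ : Measure G) (B : ℕ → Set G)
    (n : ℕ) (h : G → ℝ) : ℝ :=
  ⨆ r : G, (μ (B n)).toReal⁻¹ * ∫ t in (r +ᵥ B n), h t ∂μ

/-- A function `f : G → E` is mean almost periodic (w.r.t. `(B n)`) if for each `ε > 0` the set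
of `t` with `M̄(‖f - f(· - t)‖) < ε` is relatively dense. -/
def MeanAPFun {G : Type*} [AddCommGroup G] [TopologicalSpace G] [MeasurableSpace G]
    (μ : Measure G) (B : ℕ → Set G) {E : Type*} [NormedAddCommGroup E] (f : G → E) : Prop :=
  ∀ ε : ℝ, 0 < ε → RelDense {t : G | upperMean μ B (fun s => ‖f s - f (s - t)‖) < ε}

/-- A function `f : G → ℂ` is Besicovitch almost periodic (w.r.t. `(B n)`) if it can be
approximated, in the seminorm `M̄(|·|)`, by finite linear combinations of continuous
characters. -/
def BesicovitchAPFun {G : Type*} [AddCommGroup G] [TopologicalSpace G] [MeasurableSpace G]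
    (μ : Measure G) (B : ℕ → Set G) (f : G → ℂ) : Prop :=
  ∀ ε : ℝ, 0 < ε → ∃ (k : ℕ) (ξ : Fin k → G → ℂ) (c : Fin k → ℂ),
    (∀ j, IsChar (ξ j)) ∧ upperMean μ B (fun s => ‖f s - ∑ j, c j * ξ j s‖) < ε

/-- A function `f : G → E` is Bohr almost periodic if for every `ε > 0` the set of `t` with
`‖f - f(· - t)‖_∞ < ε` is relatively dense. -/
def BohrAPFun {G : Type*} [AddCommGroup G] [TopologicalSpace G] {E : Type*}
    [NormedAddCommGroup E] (f : G → E) : Prop :=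
  ∀ ε : ℝ, 0 < ε → RelDense {t : G | (⨆ s : G, ‖f s - f (s - t)‖) < ε}

/-- The orbit `{t +ᵥ x : t ∈ G}` of a point. -/
def orbitSet (G : Type*) {X : Type*} [AddCommGroup G] [AddAction G X] (x : X) : Set X :=
  Set.range fun t : G => t +ᵥ x

/-- The averaged pseudometric `D(x,y) = M̄(s ↦ dist(s x, s y))`. -/
def avgDist {G : Type*} [AddCommGroup G] [MeasurableSpace G] {X : Type*} [PseudoMetricSpace X]
    [AddAction G X] (μ : Measure G) (B : ℕ → Set G) (x y : X) : ℝ :=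
  upperMean μ B fun s => dist (s +ᵥ x) (s +ᵥ y)

/-- A point `x` is mean almost periodic (w.r.t. the metric of `X` and `(B n)`) if for every
`ε > 0` the set `{t : D(x, t x) < ε}` is relatively dense. -/
def MeanAPPoint {G : Type*} [AddCommGroup G] [TopologicalSpace G] [MeasurableSpace G]
    {X : Type*} [PseudoMetricSpace X] [AddAction G X] (μ : Measure G) (B : ℕ → Set G)
    (x : X) : Prop :=
  ∀ ε : ℝ, 0 < ε → RelDense {t : G | avgDist μ B x (t +ᵥ x) < ε}

/-- Mean almost periodicity of a point with respect to an abstract metric `d` on `X`. -/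
def MeanAPPointWith {G : Type*} [AddCommGroup G] [TopologicalSpace G] [MeasurableSpace G]
    {X : Type*} [AddAction G X] (μ : Measure G) (B : ℕ → Set G) (d : X → X → ℝ)
    (x : X) : Prop :=
  ∀ ε : ℝ, 0 < ε → RelDense {t : G | upperMean μ B (fun s => d (s +ᵥ x) (s +ᵥ (t +ᵥ x))) < ε}

/-- A point `x` is Besicovitch almost periodic if `t ↦ f (t +ᵥ x)` is a Besicovitch almost
periodic function for every continuous `f : X → ℂ`. -/
def BesicovitchAPPoint {G : Type*} [AddCommGroup G] [TopologicalSpace G] [MeasurableSpace G]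
    {X : Type*} [TopologicalSpace X] [AddAction G X] (μ : Measure G) (B : ℕ → Set G)
    (x : X) : Prop :=
  ∀ f : C(X, ℂ), BesicovitchAPFun μ B fun t : G => f (t +ᵥ x)

/-- The averaged pseudometric `D_n(x,y) = M̄_n(s ↦ dist(s x, s y))` at level `n`. -/
def weylDist {G : Type*} [AddCommGroup G] [MeasurableSpace G] {X : Type*} [PseudoMetricSpace X]
    [AddAction G X] (μ : Measure G) (B : ℕ → Set G) (n : ℕ) (x y : X) : ℝ :=
  supAvg μ B n fun s => dist (s +ᵥ x) (s +ᵥ y)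

/-- A point `x` is Weyl almost periodic if for every `ε > 0` there is an `N` such that
`{t : D_N(x, t x) < ε}` is relatively dense. -/
def WeylAPPoint {G : Type*} [AddCommGroup G] [TopologicalSpace G] [MeasurableSpace G]
    {X : Type*} [PseudoMetricSpace X] [AddAction G X] (μ : Measure G) (B : ℕ → Set G)
    (x : X) : Prop :=
  ∀ ε : ℝ, 0 < ε → ∃ N : ℕ, RelDense {t : G | weylDist μ B N x (t +ᵥ x) < ε}

/-- A point `y` is generic for the measure `m` along `(B n)`. -/
def IsGeneric {G : Type*} [AddCommGroup G] [MeasurableSpace G] {X : Type*}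
    [TopologicalSpace X] [MeasurableSpace X] [AddAction G X] (μ : Measure G) (B : ℕ → Set G)
    (m : Measure X) (y : X) : Prop :=
  ∀ f : C(X, ℂ),
    Tendsto (fun n => avgC μ B n fun t => f (t +ᵥ y)) atTop (𝓝 (∫ z, f z ∂m))

/-- The measure `m` is invariant under the action of `G`. -/
def InvariantMeasure (G : Type*) [AddCommGroup G] {X : Type*} [MeasurableSpace X]
    [AddAction G X] (m : Measure X) : Prop :=
  ∀ t : G, MeasurePreserving (fun x : X => t +ᵥ x) m m

/-- The measure `m` is ergodic for the action of `G`. -/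
def ErgodicMeasure (G : Type*) [AddCommGroup G] {X : Type*} [MeasurableSpace X]
    [AddAction G X] (m : Measure X) : Prop :=
  ∀ A : Set X, MeasurableSet A → (∀ t : G, (fun x : X => t +ᵥ x) ⁻¹' A = A) →
    m A = 0 ∨ m A = 1

/-- `f` is an eigenfunction of `(X,G,m)` with eigenvalue the continuous character `ξ`. -/
def IsEigenfunctionWith {G : Type*} [AddCommGroup G] [TopologicalSpace G] {X : Type*}
    [MeasurableSpace X] [AddAction G X] (m : Measure X) (ξ : G → ℂ) (f : X → ℂ) : Prop :=
  IsChar ξ ∧ MemLp f 2 m ∧ ¬ f =ᵐ[m] (fun _ => (0 : ℂ)) ∧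
    ∀ t : G, (fun x => f (t +ᵥ x)) =ᵐ[m] fun x => ξ t * f x

/-- The set of eigenvalues of `(X,G,m)`. -/
def Eig (G : Type*) [AddCommGroup G] [TopologicalSpace G] {X : Type*} [MeasurableSpace X]
    [AddAction G X] (m : Measure X) : Set (G → ℂ) :=
  {ξ | ∃ f : X → ℂ, IsEigenfunctionWith m ξ f}

/-- `(X,G,m)` has pure point spectrum: `L²(X,m)` possesses an orthonormal (Hilbert) basis
consisting of eigenfunctions. -/
def PurePointSpectrum (G : Type*) [AddCommGroup G] [TopologicalSpace G] {X : Type*}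
    [MeasurableSpace X] [AddAction G X] (m : Measure X) : Prop :=
  ∃ (ι : Type) (b : HilbertBasis ι ℂ (Lp ℂ 2 m)), ∀ i : ι,
    ∃ (ξ : G → ℂ) (f : X → ℂ) (hf : MemLp f 2 m),
      IsEigenfunctionWith m ξ f ∧ b i = hf.toLp f

/-- Every eigenvalue of `(X,G,m)` admits a continuous eigenfunction. -/
def ContinuousEigenfunctions (G : Type*) [AddCommGroup G] [TopologicalSpace G] {X : Type*}
    [TopologicalSpace X] [MeasurableSpace X] [AddAction G X] (m : Measure X) : Prop :=
  ∀ ξ ∈ Eig G m, ∃ f : X → ℂ, Continuous f ∧ IsEigenfunctionWith m ξ f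

/-- The set of frequencies of a point `x`: those continuous characters `ξ` for which the
average `A((t ↦ f(t +ᵥ x)) ⋅ conj ξ)` exists and is nonzero for some `f ∈ C(X)`. -/
def Freq {G : Type*} [AddCommGroup G] [TopologicalSpace G] [MeasurableSpace G] {X : Type*}
    [TopologicalSpace X] [AddAction G X] (μ : Measure G) (B : ℕ → Set G) (x : X) :
    Set (G → ℂ) :=
  {ξ | IsChar ξ ∧ ∃ (f : C(X, ℂ)) (c : ℂ), c ≠ 0 ∧
    Tendsto (fun n => avgC μ B n fun t => f (t +ᵥ x) * (starRingEnd ℂ) (ξ t)) atTop (𝓝 c)}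

/-- Birkhoff's ergodic theorem holds along `(B n)` for `(X,G,m)`. -/
def BirkhoffAlong {G : Type*} [AddCommGroup G] [MeasurableSpace G] {X : Type*}
    [MeasurableSpace X] [AddAction G X] (μ : Measure G) (B : ℕ → Set G) (m : Measure X) :
    Prop :=
  ∀ f : X → ℂ, Integrable f m →
    ∀ᵐ x ∂m, Tendsto (fun n => avgC μ B n fun t => f (t +ᵥ x)) atTop (𝓝 (∫ z, f z ∂m))

/-- `e` is (a representative of) the orthogonal projection in `L²(X,m)` of `f` onto the
eigenspace of `ξ`: it belongs to the eigenspace and `f - e` is orthogonal to it. -/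
def IsProjOnEigenspace {G : Type*} [AddCommGroup G] {X : Type*} [MeasurableSpace X]
    [AddAction G X] (m : Measure X) (ξ : G → ℂ) (f e : X → ℂ) : Prop :=
  MemLp e 2 m ∧ (∀ t : G, (fun x => e (t +ᵥ x)) =ᵐ[m] fun x => ξ t * e x) ∧
    ∀ g : X → ℂ, MemLp g 2 m → (∀ t : G, (fun x => g (t +ᵥ x)) =ᵐ[m] fun x => ξ t * g x) →
      ∫ x, (f x - e x) * (starRingEnd ℂ) (g x) ∂m = 0

/-- `d` is a metric on the topological space `X` which generates its topology. -/
structure IsCompatMetric {X : Type*} [TopologicalSpace X] (d : X → X → ℝ) : Prop where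
  refl : ∀ x, d x x = 0
  eq_of : ∀ x y, d x y = 0 → x = y
  symm : ∀ x y, d x y = d y x
  triangle : ∀ x y z, d x z ≤ d x y + d y z
  nhds_basis : ∀ x : X, (𝓝 x).HasBasis (fun ε : ℝ => 0 < ε) fun ε => {y | d x y < ε}

/-- The metric `d̄(y,z) = sup_{s ∈ G} dist (s y) (s z)`. -/
def supDist (G : Type*) [AddCommGroup G] {X : Type*} [PseudoMetricSpace X] [AddAction G X]
    (y z : X) : ℝ :=
  ⨆ s : G, dist (s +ᵥ y) (s +ᵥ z)

/-- The function `f_x : t ↦ f (t +ᵥ x)` as a bounded continuous function on `G`. -/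
def fnAlong {G : Type*} [AddCommGroup G] [TopologicalSpace G] {X : Type*}
    [TopologicalSpace X] [CompactSpace X] [AddAction G X] [ContinuousVAdd G X]
    (f : C(X, ℂ)) (x : X) : BoundedContinuousFunction G ℂ :=
  BoundedContinuousFunction.ofNormedAddCommGroup (fun t => f (t +ᵥ x))
    (f.continuous.comp (continuous_vadd.comp (continuous_id.prodMk continuous_const)))
    ‖f‖ (fun t => f.norm_coe_le_norm _)

/-- The translate `F(· - t)` of a bounded continuous function on `G`. -/
def translateB {G : Type*} [AddCommGroup G] [TopologicalSpace G] [IsTopologicalAddGroup G]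
    (t : G) (F : BoundedContinuousFunction G ℂ) : BoundedContinuousFunction G ℂ :=
  F.compContinuous ⟨fun s => s - t, continuous_sub_right t⟩

/-- A bounded continuous function on `G` is weakly almost periodic if it is uniformly
continuous and its set of translates is relatively compact in the weak topology. -/
def WeaklyAPFun {G : Type*} [AddCommGroup G] [UniformSpace G] [IsUniformAddGroup G]
    (F : BoundedContinuousFunction G ℂ) : Prop :=
  UniformContinuous ⇑F ∧
    IsCompact (closure
      ((toWeakSpace ℂ (BoundedContinuousFunction G ℂ)) '' Set.range fun t : G => translateB t F))

/-- A point `x` is weakly almost periodic if `f_x` is weakly almost periodic for every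
continuous `f : X → ℂ`. -/
def WeaklyAPPoint (G : Type*) [AddCommGroup G] [UniformSpace G] [IsUniformAddGroup G]
    {X : Type*} [TopologicalSpace X] [CompactSpace X] [AddAction G X] [ContinuousVAdd G X]
    (x : X) : Prop :=
  ∀ f : C(X, ℂ), WeaklyAPFun (G := G) (fnAlong f x)

/-- A point `x` is Bohr almost periodic if `f_x` is Bohr almost periodic for every
continuous `f : X → ℂ`. -/
def BohrAPPoint (G : Type*) [AddCommGroup G] [TopologicalSpace G] {X : Type*}
    [TopologicalSpace X] [AddAction G X] (x : X) : Prop :=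
  ∀ f : C(X, ℂ), BohrAPFun fun t : G => f (t +ᵥ x)

/-- The function `f_t : x ↦ f (t +ᵥ x)` as a continuous function on `X`. -/
def translateCM {G : Type*} [AddCommGroup G] {X : Type*} [TopologicalSpace X] [AddAction G X]
    [ContinuousConstVAdd G X] (t : G) (f : C(X, ℂ)) : C(X, ℂ) :=
  f.comp ⟨fun x => t +ᵥ x, continuous_const_vadd t⟩

/-- `(X,G)` is a weakly almost periodic dynamical system: for every `f ∈ C(X)` the family
`{f_t : t ∈ G}` is relatively compact in the weak topology of `C(X)`. -/
def WeaklyAPSystem (G : Type*) (X : Type*) [AddCommGroup G] [TopologicalSpace X]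
    [CompactSpace X] [T2Space X] [AddAction G X] [ContinuousConstVAdd G X] : Prop :=
  ∀ f : C(X, ℂ),
    IsCompact (closure ((toWeakSpace ℂ C(X, ℂ)) '' Set.range fun t : G => translateCM t f))

open scoped ComplexConjugate

/-!
Invariance is formal: translating a point translates the functions `f_x`, and an invariant
measure keeps translated generic points generic.

Measurability is the real issue, since Besicovitch almost periodicity quantifies over the
uncountably many characters of `G`. For `f ∈ C(X)` the spectral weight
`W_i(f, χ) = ∫ ‖⨍_{B_i} f(k y) χ̄(k) dk‖² dm(y)` does not depend on a point, and a Bessel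
inequality for the almost orthogonal characters on `B_i` shows that `liminf_i W_i(f, χ) > 0` for
only countably many `χ`. Along a generic orbit the Følner property bounds the Fourier–Bohr
coefficient of `f_x` at `χ` by `W_i(f, χ)^{1/2}` for every `i`, so it vanishes off this countable
spectral support. Hence a Besicovitch approximation of `f_x`, made uniformly bounded by clipping
and Stone–Weierstrass, may drop its characters outside the spectral support without increasing
its mean-square error. So the Besicovitch almost periodic generic points are the generic points
satisfying countably many conditions `M̄(‖f_x - P‖) < ε`, with `f` in a countable dense subset of
`C(X)` and `P` a trigonometric polynomial with frequencies in a fixed countable set and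
coefficients in a countable dense set; each condition is Borel, as `x ↦ M̄(‖f_x - P‖)` is a
`limsup` of continuous functions.
-/

lemma le_inv_mul_sq_add {a r : ℝ} (hr : 0 < r) : a ≤ (2 * r)⁻¹ * a ^ 2 + r / 2 := by
  have h : 2 * r * a ≤ a ^ 2 + r ^ 2 := by nlinarith [sq_nonneg (a - r)]
  rw [← mul_le_mul_iff_of_pos_left (by positivity : 0 < 2 * r), mul_add, ← mul_assoc,
    mul_inv_cancel₀ (by positivity), one_mul]
  nlinarith

lemma limsup_le_mul_limsup_add {u v w : ℕ → ℝ} {a b : ℝ} (ha : 0 ≤ a)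
    (hu : IsCoboundedUnder (· ≤ ·) atTop u) (hv : IsBoundedUnder (· ≤ ·) atTop v)
    (hw : Tendsto w atTop (𝓝 b)) (h : ∀ n, u n ≤ a * v n + w n) :
    limsup u atTop ≤ a * limsup v atTop + b := by
  refine le_of_forall_pos_le_add fun ε hε => limsup_le_of_le hu ?_
  have hδ : 0 < ε / (2 * (a + 1)) := by positivity
  filter_upwards [eventually_lt_of_limsup_lt (lt_add_of_pos_right _ hδ) hv,
    hw.eventually (gt_mem_nhds (lt_add_of_pos_right b (half_pos hε)))] with n hvn hwn
  have : a * (ε / (2 * (a + 1))) ≤ ε / 2 := by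
    rw [mul_div_assoc', div_le_div_iff₀ (by positivity) two_pos]
    nlinarith
  nlinarith [h n, mul_le_mul_of_nonneg_left hvn.le ha]

lemma norm_setIntegral_sub_setIntegral_le {α E : Type*} [MeasurableSpace α]
    [NormedAddCommGroup E] [NormedSpace ℝ E] {ν : Measure α} {s t : Set α} {h : α → E} {C : ℝ}
    (hs : MeasurableSet s) (ht : MeasurableSet t) (hsν : ν s < ⊤) (htν : ν t < ⊤)
    (hhs : IntegrableOn h s ν) (hht : IntegrableOn h t ν) (hC : ∀ x, ‖h x‖ ≤ C) :
    ‖∫ x in s, h x ∂ν - ∫ x in t, h x ∂ν‖ ≤ C * (ν ((s \ t) ∪ (t \ s))).toReal := by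
  have hst : ν (s \ t) < ⊤ := (measure_mono sdiff_subset).trans_lt hsν
  have hts : ν (t \ s) < ⊤ := (measure_mono sdiff_subset).trans_lt htν
  rw [← integral_inter_add_sdiff ht hhs, ← integral_inter_add_sdiff hs hht, inter_comm,
    add_sub_add_left_eq_sub, measure_union disjoint_sdiff_sdiff (ht.diff hs),
    ENNReal.toReal_add hst.ne hts.ne, mul_add]
  exact (norm_sub_le _ _).trans <| add_le_add
    (norm_setIntegral_le_of_norm_le_const hst fun x _ => hC x)
    (norm_setIntegral_le_of_norm_le_const hts fun x _ => hC x)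

lemma preimage_vadd_setOf_eq {G X : Type*} [AddGroup G] [AddAction G X] {P : X → Prop}
    (hP : ∀ (t : G) x, P x → P (t +ᵥ x)) (t : G) :
    (fun x => t +ᵥ x) ⁻¹' {x | P x} = {x | P x} :=
  Set.ext fun x => ⟨fun h => by simpa using hP (-t) _ h, hP t x⟩

def clip (R : ℝ) (z : ℂ) : ℂ := (R / max R ‖z‖) • z

lemma continuous_clip {R : ℝ} (hR : 0 < R) : Continuous (clip R) :=
  (continuous_const.div (continuous_const.max continuous_norm) fun _ =>
    (hR.trans_le (le_max_left _ _)).ne').smul continuous_id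

lemma norm_clip_le {R : ℝ} (hR : 0 < R) (z : ℂ) : ‖clip R z‖ ≤ R := by
  have hM : 0 < max R ‖z‖ := hR.trans_le (le_max_left _ _)
  rw [clip, norm_smul, Real.norm_of_nonneg (div_nonneg hR.le hM.le), div_mul_eq_mul_div,
    div_le_iff₀ hM]
  exact mul_le_mul_of_nonneg_left (le_max_right _ _) hR.le

lemma norm_sub_clip_le {R : ℝ} (hR : 0 < R) {w z : ℂ} (hw : ‖w‖ ≤ R) :
    ‖w - clip R z‖ ≤ 2 * ‖w - z‖ := by
  have hz : ‖z - clip R z‖ ≤ ‖w - z‖ := by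
    rcases le_or_gt ‖z‖ R with h | h
    · rw [clip, max_eq_left h, div_self hR.ne', one_smul, sub_self, norm_zero]
      exact norm_nonneg _
    · have hz0 : 0 < ‖z‖ := hR.trans h
      have hsmul : z - (R / ‖z‖) • z = (1 - R / ‖z‖) • z := by rw [sub_smul, one_smul]
      rw [clip, max_eq_right h.le, hsmul, norm_smul,
        Real.norm_of_nonneg (sub_nonneg.2 ((div_le_one hz0).2 h.le)), sub_mul, one_mul,
        div_mul_cancel₀ _ hz0.ne']
      linarith [norm_sub_norm_le z w, norm_sub_rev z w]
  linarith [norm_sub_le_norm_sub_add_norm_sub w z (clip R z)]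

namespace IsChar

variable {G : Type*} [AddCommGroup G] [TopologicalSpace G] {χ η : G → ℂ}

lemma continuous (hχ : IsChar χ) : Continuous χ := hχ.1

lemma norm_eq_one (hχ : IsChar χ) (t : G) : ‖χ t‖ = 1 := hχ.2.1 t

lemma map_add (hχ : IsChar χ) (s t : G) : χ (s + t) = χ s * χ t := hχ.2.2 s t

lemma mul_conj_self (hχ : IsChar χ) (t : G) : χ t * conj (χ t) = 1 := by
  rw [Complex.mul_conj, Complex.normSq_eq_norm_sq, hχ.norm_eq_one]
  norm_num

lemma star (hχ : IsChar χ) : IsChar fun t => conj (χ t) :=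
  ⟨Complex.continuous_conj.comp hχ.continuous, fun t => by simp [hχ.norm_eq_one t],
    fun s t => by simp only [hχ.map_add s t, map_mul]⟩

lemma mul (hχ : IsChar χ) (hη : IsChar η) : IsChar fun t => χ t * η t :=
  ⟨hχ.continuous.mul hη.continuous,
    fun t => by rw [norm_mul, hχ.norm_eq_one, hη.norm_eq_one, one_mul],
    fun s t => by simp only [hχ.map_add s t, hη.map_add s t]; ring⟩

lemma one : IsChar fun _ : G => (1 : ℂ) :=
  ⟨continuous_const, fun _ => norm_one, fun _ _ => (one_mul 1).symm⟩

end IsChar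

section TrigPoly

variable {G : Type*}

def trigPoly (T : Finset (G → ℂ)) (d : (G → ℂ) → ℂ) (t : G) : ℂ := ∑ χ ∈ T, d χ * χ t

lemma trigPoly_eq_sum_fin (T : Finset (G → ℂ)) (d : (G → ℂ) → ℂ) (t : G) :
    trigPoly T d t = ∑ j, d (T.equivFin.symm j) * (T.equivFin.symm j : G → ℂ) t := by
  rw [trigPoly, ← Finset.sum_coe_sort, T.equivFin.symm.sum_comp (fun χ : T => d χ * (χ : G → ℂ) t)]

lemma exists_trigPoly_eq_of_mem_span {S : Set (G → ℂ)} {P : G → ℂ}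
    (hP : P ∈ Submodule.span ℂ S) : ∃ (T : Finset (G → ℂ)) (d : (G → ℂ) → ℂ),
      ↑T ⊆ S ∧ P = trigPoly T d := by
  obtain ⟨c, hcS, rfl⟩ := Submodule.mem_span_set.1 hP
  refine ⟨c.support, c, hcS, funext fun t => ?_⟩
  simp [Finsupp.sum, trigPoly]

open scoped Classical in
lemma sum_sum_mul_conj_ite_eq (T T' : Finset (G → ℂ)) (hT' : T' ⊆ T) (d : (G → ℂ) → ℂ) :
    ∑ η ∈ T, ∑ χ ∈ T', d η * conj (d χ) * (if η = χ then 1 else 0) =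
      ∑ χ ∈ T', (‖d χ‖ ^ 2 : ℂ) := by
  simp only [mul_ite, mul_one, mul_zero, Finset.sum_ite_eq, Finset.sum_ite_mem,
    Finset.inter_eq_right.2 hT', Complex.mul_conj']

variable [AddCommGroup G] [TopologicalSpace G]

lemma continuous_trigPoly {T : Finset (G → ℂ)} (hT : ∀ χ ∈ T, IsChar χ) (d : (G → ℂ) → ℂ) :
    Continuous (trigPoly T d) :=
  continuous_finsetSum _ fun χ hχ => continuous_const.mul (hT χ hχ).continuous

lemma norm_trigPoly_le {T : Finset (G → ℂ)} (hT : ∀ χ ∈ T, IsChar χ) (d : (G → ℂ) → ℂ)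
    (t : G) : ‖trigPoly T d t‖ ≤ ∑ χ ∈ T, ‖d χ‖ :=
  (norm_sum_le _ _).trans_eq <| Finset.sum_congr rfl fun χ hχ => by
    rw [norm_mul, (hT χ hχ).norm_eq_one, mul_one]

lemma continuous_sum_mul_chars {k : ℕ} {ξ : Fin k → G → ℂ} (hξ : ∀ j, IsChar (ξ j))
    (c : Fin k → ℂ) : Continuous fun t => ∑ j, c j * ξ j t :=
  continuous_finsetSum _ fun j _ => continuous_const.mul (hξ j).continuous

lemma norm_sum_mul_chars_le {k : ℕ} {ξ : Fin k → G → ℂ} (hξ : ∀ j, IsChar (ξ j))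
    (c : Fin k → ℂ) (t : G) : ‖∑ j, c j * ξ j t‖ ≤ ∑ j, ‖c j‖ :=
  (norm_sum_le _ _).trans_eq <| Finset.sum_congr rfl fun j _ => by
    rw [norm_mul, (hξ j).norm_eq_one, mul_one]

lemma const_mem_span_chars (c : ℂ) :
    (fun _ : G => c) ∈ Submodule.span ℂ {χ : G → ℂ | IsChar χ} := by
  convert Submodule.smul_mem _ c
    (Submodule.subset_span (s := {χ : G → ℂ | IsChar χ}) IsChar.one) using 1
  funext t
  simp

lemma mul_mem_span_chars {a b : G → ℂ} (ha : a ∈ Submodule.span ℂ {χ : G → ℂ | IsChar χ})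
    (hb : b ∈ Submodule.span ℂ {χ : G → ℂ | IsChar χ}) :
    a * b ∈ Submodule.span ℂ {χ : G → ℂ | IsChar χ} := by
  have hle : Submodule.span ℂ {χ : G → ℂ | IsChar χ} * Submodule.span ℂ {χ | IsChar χ} ≤
      Submodule.span ℂ {χ | IsChar χ} := by
    rw [Submodule.span_mul_span]
    exact Submodule.span_mono (Set.mul_subset_iff.2 fun χ hχ η hη => hχ.mul hη)
  exact hle (Submodule.mul_mem_mul ha hb)

lemma conj_mem_span_chars {a : G → ℂ} (ha : a ∈ Submodule.span ℂ {χ : G → ℂ | IsChar χ}) :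
    (fun t => conj (a t)) ∈ Submodule.span ℂ {χ : G → ℂ | IsChar χ} := by
  induction ha using Submodule.span_induction with
  | mem χ hχ => exact Submodule.subset_span hχ.star
  | zero =>
    convert (Submodule.span ℂ {χ : G → ℂ | IsChar χ}).zero_mem using 1
    funext t
    simp
  | add a b _ _ ha hb =>
    convert Submodule.add_mem _ ha hb using 1
    funext t
    simp
  | smul c a _ ha =>
    convert Submodule.smul_mem _ (conj c) ha using 1
    funext t
    simp

lemma exists_mem_span_chars_approx {k : ℕ} {ξ : Fin k → G → ℂ} (hξ : ∀ j, IsChar (ξ j))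
    {h : (Fin k → ℂ) → ℂ} (hh : Continuous h) {ε : ℝ} (hε : 0 < ε) :
    ∃ P ∈ Submodule.span ℂ {χ : G → ℂ | IsChar χ}, ∀ t, ‖h (fun j => ξ j t) - P t‖ ≤ ε := by
  set K : Set (Fin k → ℂ) := Metric.closedBall 0 1
  have : CompactSpace K := isCompact_iff_compactSpace.1 (isCompact_closedBall 0 1)
  have hK : ∀ t, (fun j => ξ j t) ∈ K := fun t => mem_closedBall_zero_iff.2
    ((pi_norm_le_iff_of_nonneg zero_le_one).2 fun j => ((hξ j).norm_eq_one t).le)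
  let coord : Fin k → C(K, ℂ) := fun j => ⟨fun v => (v : Fin k → ℂ) j,
    (continuous_apply j).comp continuous_subtype_val⟩
  set A := StarAlgebra.adjoin ℂ (range coord)
  have hsep : A.SeparatesPoints := fun v w hvw => by
    obtain ⟨j, hj⟩ := Function.ne_iff.1 (Subtype.coe_injective.ne hvw)
    exact ⟨_, ⟨coord j, StarAlgebra.subset_adjoin ℂ _ (mem_range_self j), rfl⟩, hj⟩
  have hmem : (⟨fun v => h v, by fun_prop⟩ : C(K, ℂ)) ∈ closure (A : Set C(K, ℂ)) := by
    rw [← A.topologicalClosure_coe,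
      ContinuousMap.starSubalgebra_topologicalClosure_eq_top_of_separatesPoints A hsep]
    trivial
  obtain ⟨p, hpA, hp⟩ := Metric.mem_closure_iff.1 hmem ε hε
  refine ⟨fun t => p ⟨_, hK t⟩, ?_, fun t => ?_⟩
  · clear hp
    induction hpA using StarAlgebra.adjoin_induction with
    | mem q hq =>
      obtain ⟨j, rfl⟩ := hq
      exact Submodule.subset_span (hξ j)
    | algebraMap c => exact const_mem_span_chars c
    | add q r _ _ hq hr => exact Submodule.add_mem _ hq hr
    | mul q r _ _ hq hr => exact mul_mem_span_chars hq hr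
    | star q _ hq => exact conj_mem_span_chars hq
  · rw [← dist_eq_norm]
    exact (ContinuousMap.dist_apply_le_dist ⟨_, hK t⟩).trans hp.le

end TrigPoly

section Averages

variable {G : Type*} [MeasurableSpace G] {μ : Measure G} {B : ℕ → Set G}

lemma avgC_const_mul (n : ℕ) (a : ℂ) (h : G → ℂ) :
    avgC μ B n (fun t => a * h t) = a * avgC μ B n h := by
  rw [avgC, avgC, integral_const_mul, mul_smul_comm]

lemma avg_const_mul (n : ℕ) (a : ℝ) (h : G → ℝ) :
    avg μ B n (fun t => a * h t) = a * avg μ B n h := by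
  rw [avg, avg, integral_const_mul, mul_left_comm]

lemma avgC_sub (n : ℕ) {h g : G → ℂ} (hh : IntegrableOn h (B n) μ)
    (hg : IntegrableOn g (B n) μ) :
    avgC μ B n (fun t => h t - g t) = avgC μ B n h - avgC μ B n g := by
  rw [avgC, avgC, avgC, integral_sub hh hg, smul_sub]

lemma avg_add (n : ℕ) {h g : G → ℝ} (hh : IntegrableOn h (B n) μ)
    (hg : IntegrableOn g (B n) μ) :
    avg μ B n (fun t => h t + g t) = avg μ B n h + avg μ B n g := by
  rw [avg, avg, avg, integral_add hh hg, mul_add]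

lemma avgC_finsetSum {ι : Type*} (n : ℕ) (T : Finset ι) {F : ι → G → ℂ}
    (hF : ∀ i ∈ T, IntegrableOn (F i) (B n) μ) :
    avgC μ B n (fun t => ∑ i ∈ T, F i t) = ∑ i ∈ T, avgC μ B n (F i) := by
  rw [avgC, integral_finsetSum T hF, Finset.smul_sum]
  rfl

lemma avgC_ofReal (n : ℕ) (h : G → ℝ) :
    avgC μ B n (fun t => (h t : ℂ)) = avg μ B n h := by
  rw [avgC, avg, integral_complex_ofReal, Complex.real_smul, Complex.ofReal_mul]

lemma re_avgC (n : ℕ) {h : G → ℂ} (hh : IntegrableOn h (B n) μ) :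
    (avgC μ B n h).re = avg μ B n fun t => (h t).re := by
  rw [avgC, avg, Complex.smul_re, smul_eq_mul, ← RCLike.re_to_complex, ← integral_re hh]
  rfl

lemma avg_nonneg (n : ℕ) {h : G → ℝ} (hh : ∀ t, 0 ≤ h t) : 0 ≤ avg μ B n h :=
  mul_nonneg (by positivity) (setIntegral_nonneg_of_ae_restrict (.of_forall hh))

lemma norm_avgC_le_avg_norm (n : ℕ) (h : G → ℂ) :
    ‖avgC μ B n h‖ ≤ avg μ B n fun t => ‖h t‖ := by
  rw [avgC, avg, norm_smul, Real.norm_of_nonneg (by positivity)]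
  exact mul_le_mul_of_nonneg_left (norm_integral_le_integral_norm _) (by positivity)

def BesicovitchApproxBy (μ : Measure G) (B : ℕ → Set G) (S : Set (G → ℂ)) (F : G → ℂ) :
    Prop :=
  ∀ ε : ℝ, 0 < ε → ∃ (k : ℕ) (ξ : Fin k → G → ℂ) (c : Fin k → ℂ),
    (∀ j, ξ j ∈ S) ∧ upperMean μ B (fun t => ‖F t - ∑ j, c j * ξ j t‖) < ε

lemma BesicovitchApproxBy.mono {S S' : Set (G → ℂ)} (hSS' : S ⊆ S') {F : G → ℂ}
    (h : BesicovitchApproxBy μ B S F) : BesicovitchApproxBy μ B S' F := fun ε hε =>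
  let ⟨k, ξ, c, hξ, hlt⟩ := h ε hε
  ⟨k, ξ, c, fun j => hSS' (hξ j), hlt⟩

variable [AddCommGroup G] [TopologicalSpace G]

lemma BesicovitchApproxBy.besicovitchAPFun {S : Set (G → ℂ)} (hS : ∀ χ ∈ S, IsChar χ)
    {F : G → ℂ} (h : BesicovitchApproxBy μ B S F) : BesicovitchAPFun μ B F := fun ε hε =>
  let ⟨k, ξ, c, hξ, hlt⟩ := h ε hε
  ⟨k, ξ, c, fun j => hS _ (hξ j), hlt⟩

variable [μ.IsAddHaarMeasure]

namespace IsFolner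

lemma measure_lt_top (hB : IsFolner μ B) (n : ℕ) : μ (B n) < ⊤ :=
  (measure_mono subset_closure).trans_lt (hB.relCompact n).measure_lt_top

lemma isFiniteMeasure_restrict (hB : IsFolner μ B) (n : ℕ) :
    IsFiniteMeasure (μ.restrict (B n)) :=
  MeasureTheory.isFiniteMeasure_restrict.2 (hB.measure_lt_top n).ne

lemma toReal_measure_pos (hB : IsFolner μ B) (n : ℕ) : 0 < (μ (B n)).toReal :=
  ENNReal.toReal_pos ((hB.isOpen n).measure_pos μ (hB.nonempty n)).ne' (hB.measure_lt_top n).ne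

end IsFolner

lemma avgC_const (hB : IsFolner μ B) (n : ℕ) (c : ℂ) : avgC μ B n (fun _ => c) = c := by
  rw [avgC, setIntegral_const, measureReal_def, smul_smul,
    inv_mul_cancel₀ (hB.toReal_measure_pos n).ne', one_smul]

lemma avg_const (hB : IsFolner μ B) (n : ℕ) (c : ℝ) : avg μ B n (fun _ => c) = c := by
  rw [avg, setIntegral_const, measureReal_def, smul_eq_mul, ← mul_assoc,
    inv_mul_cancel₀ (hB.toReal_measure_pos n).ne', one_mul]

lemma avgC_avgC_comm (hB : IsFolner μ B) (n i : ℕ) {F : G → G → ℂ} {C : ℝ}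
    (hF : StronglyMeasurable (Function.uncurry F)) (hC : ∀ t k, ‖F t k‖ ≤ C) :
    (avgC μ B n fun t => avgC μ B i fun k => F t k) =
      avgC μ B i fun k => avgC μ B n fun t => F t k := by
  have := hB.isFiniteMeasure_restrict n
  have := hB.isFiniteMeasure_restrict i
  have hint : Integrable (Function.uncurry F) ((μ.restrict (B n)).prod (μ.restrict (B i))) :=
    .of_bound hF.aestronglyMeasurable C (ae_of_all _ fun p => hC p.1 p.2)
  simp only [avgC, integral_smul, integral_integral_swap hint]
  exact smul_comm _ _ _

variable [BorelSpace G]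

lemma IsFolner.integrableOn {E : Type*} [NormedAddCommGroup E] (hB : IsFolner μ B) (n : ℕ)
    {h : G → E} (hh : Continuous h) : IntegrableOn h (B n) μ :=
  (hh.continuousOn.integrableOn_compact' (hB.relCompact n)
    isClosed_closure.measurableSet).mono_set subset_closure

lemma avg_mono (hB : IsFolner μ B) (n : ℕ) {h g : G → ℝ} (hh : Continuous h) (hg : Continuous g)
    (hle : ∀ t, h t ≤ g t) : avg μ B n h ≤ avg μ B n g :=
  mul_le_mul_of_nonneg_left (setIntegral_mono (hB.integrableOn n hh) (hB.integrableOn n hg) hle)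
    (by positivity)

lemma avg_le_of_le (hB : IsFolner μ B) (n : ℕ) {h : G → ℝ} {C : ℝ} (hh : Continuous h)
    (hC : ∀ t, h t ≤ C) : avg μ B n h ≤ C :=
  (avg_mono hB n hh continuous_const hC).trans_eq (avg_const hB n C)

lemma norm_avgC_le (hB : IsFolner μ B) (n : ℕ) {h : G → ℂ} {C : ℝ} (hh : Continuous h)
    (hC : ∀ t, ‖h t‖ ≤ C) : ‖avgC μ B n h‖ ≤ C :=
  (norm_avgC_le_avg_norm n h).trans (avg_le_of_le hB n hh.norm hC)

lemma avg_le_mul_avg_add_avg (hB : IsFolner μ B) (n : ℕ) {h g e : G → ℝ} {a : ℝ}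
    (hh : Continuous h) (hg : Continuous g) (he : Continuous e)
    (hle : ∀ t, h t ≤ a * g t + e t) : avg μ B n h ≤ a * avg μ B n g + avg μ B n e := by
  refine (avg_mono hB n hh (by fun_prop) hle).trans_eq ?_
  rw [avg_add n (hB.integrableOn n (by fun_prop)) (hB.integrableOn n he), avg_const_mul]

lemma avg_le_mul_avg_add (hB : IsFolner μ B) (n : ℕ) {h g : G → ℝ} {a b : ℝ}
    (hh : Continuous h) (hg : Continuous g) (hle : ∀ t, h t ≤ a * g t + b) :
    avg μ B n h ≤ a * avg μ B n g + b :=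
  (avg_le_mul_avg_add_avg hB n hh hg continuous_const hle).trans_eq (by rw [avg_const hB])

lemma upperMean_le_mul_add (hB : IsFolner μ B) {h g : G → ℝ} {a b C : ℝ} (ha : 0 ≤ a)
    (hh : Continuous h) (hg : Continuous g) (h0 : ∀ t, 0 ≤ h t) (hC : ∀ t, g t ≤ C)
    (hle : ∀ t, h t ≤ a * g t + b) : upperMean μ B h ≤ a * upperMean μ B g + b :=
  limsup_le_mul_limsup_add ha
    (isBoundedUnder_of ⟨0, fun n => avg_nonneg n h0⟩).isCoboundedUnder_flip
    (isBoundedUnder_of ⟨C, fun n => avg_le_of_le hB n hg hC⟩) tendsto_const_nhds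
    fun n => avg_le_mul_avg_add hB n hh hg hle

lemma upperMean_norm_sub_sum_le (hB : IsFolner μ B) {F : G → ℂ} {C : ℝ} (hF : Continuous F)
    (hFC : ∀ t, ‖F t‖ ≤ C) {k : ℕ} {ξ : Fin k → G → ℂ} (hξ : ∀ j, IsChar (ξ j))
    (c c' : Fin k → ℂ) :
    upperMean μ B (fun t => ‖F t - ∑ j, c' j * ξ j t‖) ≤
      upperMean μ B (fun t => ‖F t - ∑ j, c j * ξ j t‖) + k * ‖c' - c‖ := by
  have hle := upperMean_le_mul_add hB (h := fun t => ‖F t - ∑ j, c' j * ξ j t‖)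
    (g := fun t => ‖F t - ∑ j, c j * ξ j t‖) (b := k * ‖c' - c‖) zero_le_one
    (hF.sub (continuous_sum_mul_chars hξ c')).norm (hF.sub (continuous_sum_mul_chars hξ c)).norm
    (fun _ => norm_nonneg _)
    (fun t => (norm_sub_le _ _).trans (add_le_add (hFC t) (norm_sum_mul_chars_le hξ c t)))
    fun t => by
      have hdiff : (∑ j, c j * ξ j t) - ∑ j, c' j * ξ j t = ∑ j, (c - c') j * ξ j t := by
        simp only [Pi.sub_apply, sub_mul, Finset.sum_sub_distrib]
      have hsum : ‖∑ j, (c - c') j * ξ j t‖ ≤ k * ‖c' - c‖ :=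
        (norm_sum_mul_chars_le hξ _ t).trans <| (Finset.sum_le_sum fun j _ =>
          (norm_le_pi_norm (c - c') j).trans_eq (norm_sub_rev c c')).trans_eq (by simp)
      have htri := norm_sub_le_norm_sub_add_norm_sub (F t) (∑ j, c j * ξ j t) (∑ j, c' j * ξ j t)
      rw [hdiff] at htri
      linarith
  rwa [one_mul] at hle

lemma exists_mem_upperMean_norm_sub_sum_lt (hB : IsFolner μ B) {F : G → ℂ} {C : ℝ}
    (hF : Continuous F) (hFC : ∀ t, ‖F t‖ ≤ C) {k : ℕ} {ξ : Fin k → G → ℂ}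
    (hξ : ∀ j, IsChar (ξ j)) {D : Set (Fin k → ℂ)} (hD : Dense D) {c : Fin k → ℂ} {q : ℝ}
    (hq : upperMean μ B (fun t => ‖F t - ∑ j, c j * ξ j t‖) < q) :
    ∃ c' ∈ D, upperMean μ B (fun t => ‖F t - ∑ j, c' j * ξ j t‖) < q := by
  set δ := q - upperMean μ B (fun t => ‖F t - ∑ j, c j * ξ j t‖)
  have hδ : 0 < δ := sub_pos.2 hq
  obtain ⟨c', hc'D, hc'⟩ := hD.exists_dist_lt c (show 0 < δ / (k + 1) by positivity)
  refine ⟨c', hc'D, ?_⟩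
  have hk : (k : ℝ) * ‖c' - c‖ < δ := by
    rw [← dist_eq_norm, dist_comm]
    calc (k : ℝ) * dist c c' ≤ k * (δ / (k + 1)) := by gcongr
      _ < δ := by rw [mul_div_assoc', div_lt_iff₀ (by positivity)]; linarith
  linarith [upperMean_norm_sub_sum_le hB hF hFC hξ c c']

lemma continuous_avgC_param (hB : IsFolner μ B) (n : ℕ) {Y : Type*} [TopologicalSpace Y]
    [FirstCountableTopology Y] [CompactSpace Y] {F : G → Y → ℂ}
    (hF : Continuous (Function.uncurry F)) : Continuous fun y => avgC μ B n fun t => F t y := by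
  obtain ⟨C, hC⟩ :=
    ((hB.relCompact n).prod isCompact_univ).exists_bound_of_continuousOn hF.continuousOn
  unfold avgC
  exact (continuous_of_dominated (bound := fun _ => C)
    (fun y => (hF.comp (continuous_id.prodMk continuous_const)).aestronglyMeasurable)
    (fun y => ae_restrict_of_forall_mem (hB.isOpen n).measurableSet fun t ht =>
      hC (t, y) ⟨subset_closure ht, mem_univ y⟩)
    (integrableOn_const (hB.measure_lt_top n).ne)
    (ae_of_all _ fun t => hF.comp (continuous_const.prodMk continuous_id))).const_smul
      (μ (B n)).toReal⁻¹

lemma continuous_avg_param (hB : IsFolner μ B) (n : ℕ) {Y : Type*} [TopologicalSpace Y]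
    [FirstCountableTopology Y] [CompactSpace Y] {F : G → Y → ℝ}
    (hF : Continuous (Function.uncurry F)) : Continuous fun y => avg μ B n fun t => F t y := by
  have := continuous_avgC_param hB n (F := fun t y => (F t y : ℂ))
    (Complex.continuous_ofReal.comp hF)
  refine (Complex.continuous_re.comp this).congr fun y => ?_
  simp only [Function.comp_apply, avgC_ofReal, Complex.ofReal_re]

lemma tendsto_avg_two_re_mul_conj_add_norm_sq (hB : IsFolner μ B) {a r : G → ℂ} {z w : ℂ}
    (ha : Continuous a) (hr : Continuous r)
    (haz : Tendsto (fun n => avgC μ B n fun t => a t * conj (r t)) atTop (𝓝 z))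
    (hrw : Tendsto (fun n => avgC μ B n fun t => r t * conj (r t)) atTop (𝓝 w)) :
    Tendsto (fun n => avg μ B n fun t => 2 * (a t * conj (r t)).re + ‖r t‖ ^ 2) atTop
      (𝓝 (2 * z.re + w.re)) := by
  have heq : ∀ n, (avg μ B n fun t => 2 * (a t * conj (r t)).re + ‖r t‖ ^ 2) =
      2 * (avgC μ B n fun t => a t * conj (r t)).re + (avgC μ B n fun t => r t * conj (r t)).re :=
    fun n => by
      rw [avg_add n (hB.integrableOn n (by fun_prop)) (hB.integrableOn n (by fun_prop)),
        avg_const_mul, re_avgC n (hB.integrableOn n (by fun_prop)),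
        re_avgC n (hB.integrableOn n (by fun_prop))]
      simp only [Complex.mul_conj', ← Complex.ofReal_pow, Complex.ofReal_re]
  simp only [heq]
  exact (((Complex.continuous_re.tendsto _).comp haz).const_mul 2).add
    ((Complex.continuous_re.tendsto _).comp hrw)

lemma avgC_trigPoly_mul (hB : IsFolner μ B) {T : Finset (G → ℂ)} (hT : ∀ χ ∈ T, IsChar χ)
    (d : (G → ℂ) → ℂ) {g : G → ℂ} (hg : Continuous g) (n : ℕ) :
    avgC μ B n (fun t => trigPoly T d t * g t) =
      ∑ χ ∈ T, d χ * avgC μ B n fun t => χ t * g t := by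
  simp only [trigPoly, Finset.sum_mul, mul_assoc]
  rw [avgC_finsetSum n T fun χ hχ => hB.integrableOn n (by have := (hT χ hχ).continuous; fun_prop)]
  simp only [avgC_const_mul]

lemma avgC_mul_conj_trigPoly (hB : IsFolner μ B) {T : Finset (G → ℂ)} (hT : ∀ χ ∈ T, IsChar χ)
    (d : (G → ℂ) → ℂ) {h : G → ℂ} (hh : Continuous h) (n : ℕ) :
    avgC μ B n (fun t => h t * conj (trigPoly T d t)) =
      ∑ χ ∈ T, conj (d χ) * avgC μ B n fun t => h t * conj (χ t) := by
  simp only [trigPoly, map_sum, map_mul, Finset.mul_sum]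
  rw [avgC_finsetSum n T fun χ hχ => hB.integrableOn n (by have := (hT χ hχ).continuous; fun_prop)]
  refine Finset.sum_congr rfl fun χ _ => ?_
  rw [← avgC_const_mul]
  simp only [mul_left_comm]

lemma avgC_trigPoly_mul_conj_trigPoly (hB : IsFolner μ B) {T T' : Finset (G → ℂ)}
    (hT : ∀ χ ∈ T, IsChar χ) (hT' : ∀ χ ∈ T', IsChar χ) (d d' : (G → ℂ) → ℂ) (n : ℕ) :
    avgC μ B n (fun t => trigPoly T d t * conj (trigPoly T' d' t)) =
      ∑ η ∈ T, ∑ χ ∈ T', d η * conj (d' χ) * avgC μ B n fun t => η t * conj (χ t) := by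
  rw [avgC_trigPoly_mul hB hT d (g := fun t => conj (trigPoly T' d' t))
    (Complex.continuous_conj.comp (continuous_trigPoly hT' d'))]
  refine Finset.sum_congr rfl fun η hη => ?_
  rw [avgC_mul_conj_trigPoly hB hT' d' (hT η hη).continuous, Finset.mul_sum]
  simp only [mul_assoc, mul_left_comm (d η)]

lemma avg_norm_trigPoly_sq_le (hB : IsFolner μ B) (n : ℕ) {T : Finset (G → ℂ)}
    (hT : ∀ χ ∈ T, IsChar χ) {b : (G → ℂ) → ℂ} {C κ : ℝ} (hb : ∀ χ ∈ T, ‖b χ‖ ≤ C)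
    (hκ : 0 ≤ κ)
    (horth : ∀ χ ∈ T, ∀ η ∈ T, χ ≠ η → ‖avgC μ B n fun t => χ t * conj (η t)‖ ≤ κ) :
    avg μ B n (fun t => ‖trigPoly T b t‖ ^ 2) ≤
      ∑ χ ∈ T, ‖b χ‖ ^ 2 + (T.card : ℝ) ^ 2 * C ^ 2 * κ := by
  classical
  set β : ℝ := ∑ χ ∈ T, ‖b χ‖ ^ 2
  have hg := continuous_trigPoly hT b
  have hgg : ‖(avgC μ B n fun t => trigPoly T b t * conj (trigPoly T b t)) - β‖ ≤
      (T.card : ℝ) ^ 2 * C ^ 2 * κ := by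
    rw [avgC_trigPoly_mul_conj_trigPoly hB hT hT b b, show (β : ℂ) = ∑ η ∈ T, ∑ χ ∈ T,
      b η * conj (b χ) * (if η = χ then 1 else 0) by
        simp only [β, Complex.ofReal_sum, Complex.ofReal_pow]
        exact (sum_sum_mul_conj_ite_eq T T le_rfl b).symm]
    simp only [← Finset.sum_sub_distrib, ← mul_sub]
    refine (norm_sum_le_of_le _ fun η hη => norm_sum_le_of_le (n := fun _ => C * C * κ) _
      fun χ hχ => ?_).trans_eq (by simp only [Finset.sum_const, nsmul_eq_mul]; ring)
    rw [norm_mul, norm_mul, Complex.norm_conj]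
    refine mul_le_mul (mul_le_mul (hb η hη) (hb χ hχ) (norm_nonneg _)
      ((norm_nonneg _).trans (hb η hη))) ?_ (norm_nonneg _)
      (mul_nonneg ((norm_nonneg _).trans (hb η hη)) ((norm_nonneg _).trans (hb η hη)))
    split_ifs with hηχ
    · subst hηχ
      simp only [(hT η hη).mul_conj_self, avgC_const hB, sub_self, norm_zero, hκ]
    · rw [sub_zero]; exact horth η hη χ hχ hηχ
  have hre : avg μ B n (fun t => ‖trigPoly T b t‖ ^ 2) =
      (avgC μ B n fun t => trigPoly T b t * conj (trigPoly T b t)).re := by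
    rw [re_avgC n (hB.integrableOn n (by fun_prop))]
    simp only [Complex.mul_conj', ← Complex.ofReal_pow, Complex.ofReal_re]
  have := Complex.re_le_norm ((avgC μ B n fun t => trigPoly T b t * conj (trigPoly T b t)) - β)
  rw [Complex.sub_re, Complex.ofReal_re] at this
  linarith

-- Bessel's inequality for almost orthogonal characters, tested against `g = ∑ b_χ χ`:
-- `∑ ‖b_χ‖² = ⨍ h ḡ ≤ (C² + ⨍ ‖g‖²) / 2` and `⨍ ‖g‖² ≤ ∑ ‖b_χ‖² + #T² C² κ`.
lemma sum_norm_avgC_mul_conj_sq_le (hB : IsFolner μ B) (n : ℕ) {h : G → ℂ} {C κ : ℝ}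
    (hh : Continuous h) (hC : ∀ t, ‖h t‖ ≤ C) {T : Finset (G → ℂ)} (hT : ∀ χ ∈ T, IsChar χ)
    (hκ : 0 ≤ κ)
    (horth : ∀ χ ∈ T, ∀ η ∈ T, χ ≠ η → ‖avgC μ B n fun t => χ t * conj (η t)‖ ≤ κ) :
    ∑ χ ∈ T, ‖avgC μ B n fun t => h t * conj (χ t)‖ ^ 2 ≤
      C ^ 2 + (T.card : ℝ) ^ 2 * C ^ 2 * κ := by
  set b : (G → ℂ) → ℂ := fun χ => avgC μ B n fun t => h t * conj (χ t)
  set β : ℝ := ∑ χ ∈ T, ‖b χ‖ ^ 2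
  set g := trigPoly T b
  have hg : Continuous g := continuous_trigPoly hT b
  have hb : ∀ χ ∈ T, ‖b χ‖ ≤ C := fun χ hχ => norm_avgC_le hB n
    (hh.mul (Complex.continuous_conj.comp (hT χ hχ).continuous)) fun t => by
      rw [norm_mul, Complex.norm_conj, (hT χ hχ).norm_eq_one, mul_one]; exact hC t
  have hhg : avgC μ B n (fun t => h t * conj (g t)) = β := by
    rw [avgC_mul_conj_trigPoly hB hT b hh]
    simp only [β, Complex.ofReal_sum, Complex.ofReal_pow]
    exact Finset.sum_congr rfl fun χ _ => Complex.conj_mul' _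
  have hβ : β ≤ C ^ 2 / 2 + avg μ B n (fun t => ‖g t‖ ^ 2) / 2 := by
    have hβ0 : 0 ≤ β := Finset.sum_nonneg fun _ _ => by positivity
    calc β = ‖avgC μ B n fun t => h t * conj (g t)‖ := by
          rw [hhg, Complex.norm_real, Real.norm_of_nonneg hβ0]
      _ ≤ avg μ B n fun t => ‖h t * conj (g t)‖ := norm_avgC_le_avg_norm n _
      _ ≤ 2⁻¹ * avg μ B n (fun t => ‖g t‖ ^ 2) + C ^ 2 / 2 :=
          avg_le_mul_avg_add hB n (by fun_prop) (by fun_prop) fun t => by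
            rw [norm_mul, Complex.norm_conj]
            nlinarith [hC t, norm_nonneg (h t), norm_nonneg (g t), sq_nonneg (C - ‖g t‖)]
      _ = _ := by ring
  linarith [avg_norm_trigPoly_sq_le hB n hT hb hκ horth]

-- Clipping `∑ c_j ξ_j` to the disc of radius `C` and approximating the clipped function of
-- `(ξ_j t)_j` uniformly (Stone–Weierstrass) keeps the error uniformly bounded.
lemma BesicovitchAPFun.exists_trigPoly_approx (hB : IsFolner μ B) {F : G → ℂ} {C ε : ℝ}
    (hF : Continuous F) (hFC : ∀ t, ‖F t‖ ≤ C) (hbes : BesicovitchAPFun μ B F) (hε : 0 < ε)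
    (hεC : ε ≤ C) : ∃ (T : Finset (G → ℂ)) (d : (G → ℂ) → ℂ), (∀ χ ∈ T, IsChar χ) ∧
      (∀ t, ‖F t - trigPoly T d t‖ ≤ 3 * C) ∧
      upperMean μ B (fun t => ‖F t - trigPoly T d t‖) ≤ 3 * ε := by
  have hC : 0 < C := hε.trans_le hεC
  obtain ⟨k, ξ, c, hξ, hFP⟩ := hbes ε hε
  obtain ⟨P, hP, hPclip⟩ := exists_mem_span_chars_approx hξ (h := fun v => clip C (∑ j, c j * v j))
    ((continuous_clip hC).comp (continuous_finsetSum _ fun j _ =>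
      continuous_const.mul (continuous_apply j))) hε
  obtain ⟨T, d, hT, rfl⟩ := exists_trigPoly_eq_of_mem_span hP
  have hclose : ∀ t, ‖F t - trigPoly T d t‖ ≤ 2 * ‖F t - ∑ j, c j * ξ j t‖ + ε := fun t =>
    (norm_sub_le_norm_sub_add_norm_sub _ _ _).trans
      (add_le_add (norm_sub_clip_le hC (hFC t)) (hPclip t))
  refine ⟨T, d, hT, fun t => ?_, ?_⟩
  · calc ‖F t - trigPoly T d t‖
        ≤ ‖F t - clip C (∑ j, c j * ξ j t)‖ + ‖clip C (∑ j, c j * ξ j t) - trigPoly T d t‖ :=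
          norm_sub_le_norm_sub_add_norm_sub _ _ _
      _ ≤ (C + C) + ε := add_le_add ((norm_sub_le _ _).trans
          (add_le_add (hFC t) (norm_clip_le hC _))) (hPclip t)
      _ ≤ 3 * C := by linarith
  · have hg := hF.sub (continuous_sum_mul_chars hξ c)
    calc _ ≤ 2 * upperMean μ B (fun t => ‖F t - ∑ j, c j * ξ j t‖) + ε :=
          upperMean_le_mul_add hB zero_le_two (hF.sub (continuous_trigPoly hT d)).norm hg.norm
            (fun t => norm_nonneg _) (fun t => (norm_sub_le _ _).trans
              (add_le_add (hFC t) (norm_sum_mul_chars_le hξ c t))) hclose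
      _ ≤ 3 * ε := by linarith

variable [IsTopologicalAddGroup G]

lemma tendsto_avgC_sub_avgC_add_left (hB : IsFolner μ B) (k : G) {h : G → ℂ} {C : ℝ}
    (hh : Continuous h) (hC : ∀ t, ‖h t‖ ≤ C) :
    Tendsto (fun n => avgC μ B n h - avgC μ B n fun t => h (k + t)) atTop (𝓝 0) := by
  refine squeeze_zero_norm (fun n => ?_) (by simpa using (hB.folner k).const_mul C)
  have hBn := (hB.isOpen n).measurableSet
  have htr : ∫ t in B n, h (k + t) ∂μ = ∫ t in k +ᵥ B n, h t ∂μ :=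
    ((measurePreserving_add_left μ k).setIntegral_image_emb (measurableEmbedding_addLeft k) h
      (B n)).symm
  have hfin : μ (k +ᵥ B n) < ⊤ := by rw [measure_vadd]; exact hB.measure_lt_top n
  have hdiff := norm_setIntegral_sub_setIntegral_le hBn (hBn.const_vadd k)
    (hB.measure_lt_top n) hfin (hB.integrableOn n hh)
    (.of_bound hfin hh.aestronglyMeasurable C (ae_of_all _ hC)) hC
  rw [avgC, avgC, htr, ← smul_sub, norm_smul, Real.norm_of_nonneg (by positivity),
    mul_div_assoc', div_eq_inv_mul]
  exact mul_le_mul_of_nonneg_left hdiff (by positivity)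

lemma tendsto_avgC_of_ne_one (hB : IsFolner μ B) {χ : G → ℂ} (hχ : IsChar χ) {t₀ : G}
    (ht₀ : χ t₀ ≠ 1) : Tendsto (fun n => avgC μ B n χ) atTop (𝓝 0) := by
  have hne : 1 - χ t₀ ≠ 0 := sub_ne_zero.2 ht₀.symm
  have h := (tendsto_avgC_sub_avgC_add_left hB t₀ hχ.continuous fun t =>
    (hχ.norm_eq_one t).le).const_mul (1 - χ t₀)⁻¹
  rw [mul_zero] at h
  refine h.congr fun n => ?_
  simp only [hχ.map_add t₀, avgC_const_mul]
  field_simp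

open scoped Classical in
lemma tendsto_avgC_mul_conj (hB : IsFolner μ B) {χ η : G → ℂ} (hχ : IsChar χ)
    (hη : IsChar η) :
    Tendsto (fun n => avgC μ B n fun t => χ t * conj (η t)) atTop
      (𝓝 (if χ = η then 1 else 0)) := by
  split_ifs with h
  · subst h
    simp only [hχ.mul_conj_self, avgC_const hB, tendsto_const_nhds]
  · obtain ⟨t₀, ht₀⟩ := Function.ne_iff.1 h
    refine tendsto_avgC_of_ne_one hB (hχ.mul hη.star) (t₀ := t₀) fun h1 => ht₀ ?_
    calc χ t₀ = χ t₀ * conj (η t₀) * η t₀ := by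
          rw [mul_assoc, mul_comm (conj _), hη.mul_conj_self, mul_one]
      _ = η t₀ := by rw [h1, one_mul]

lemma tendsto_avgC_trigPoly_mul_conj (hB : IsFolner μ B) {T T' : Finset (G → ℂ)}
    (hT : ∀ χ ∈ T, IsChar χ) (hT' : T' ⊆ T) (d : (G → ℂ) → ℂ) :
    Tendsto (fun n => avgC μ B n fun t => trigPoly T d t * conj (trigPoly T' d t)) atTop
      (𝓝 (∑ χ ∈ T', (‖d χ‖ ^ 2 : ℂ))) := by
  classical
  simp only [avgC_trigPoly_mul_conj_trigPoly hB hT (fun χ hχ => hT χ (hT' hχ))]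
  rw [← sum_sum_mul_conj_ite_eq T T' hT' d]
  exact tendsto_finsetSum _ fun η hη => tendsto_finsetSum _ fun χ hχ =>
    (tendsto_avgC_mul_conj hB (hT η hη) (hT χ (hT' hχ))).const_mul _

-- By Fubini the difference is the average over `k ∈ B i` of `⨍_{B n} u - ⨍_{B n} u (· + k)`,
-- and each of these tends to `0` by the Følner property.
lemma tendsto_avgC_sub_avgC_avgC_add (hB : IsFolner μ B) (i : ℕ) {u : G → ℂ} {C : ℝ}
    (hu : Continuous u) (hC : ∀ t, ‖u t‖ ≤ C)
    (hmeas : StronglyMeasurable fun p : G × G => u (p.1 + p.2)) :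
    Tendsto (fun n => avgC μ B n u - avgC μ B n fun t => avgC μ B i fun k => u (t + k))
      atTop (𝓝 0) := by
  have hFm : ∀ n, StronglyMeasurable fun k => avgC μ B n fun t => u (t + k) := fun n => by
    have := hB.isFiniteMeasure_restrict n
    exact ((hmeas.comp_measurable measurable_swap).integral_prod_right'
      (ν := μ.restrict (B n))).fun_const_smul _
  have hFb : ∀ n k, ‖avgC μ B n fun t => u (t + k)‖ ≤ C := fun n k =>
    norm_avgC_le hB n (h := fun t => u (t + k)) (by fun_prop) fun t => hC (t + k)
  set E : ℕ → G → ℂ := fun n k => avgC μ B n u - avgC μ B n fun t => u (t + k)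
  have hEb : ∀ n k, ‖E n k‖ ≤ 2 * C := fun n k => (norm_sub_le _ _).trans <| by
    linarith [norm_avgC_le hB n hu hC, hFb n k]
  have hid : ∀ n, avgC μ B n u - (avgC μ B n fun t => avgC μ B i fun k => u (t + k)) =
      avgC μ B i (E n) := fun n => by
    rw [avgC_avgC_comm hB n i (F := fun t k => u (t + k)) hmeas fun t k => hC (t + k), avgC_sub i
      (integrableOn_const (hB.measure_lt_top i).ne) (.of_bound (hB.measure_lt_top i)
        (hFm n).aestronglyMeasurable C (ae_of_all _ (hFb n))), avgC_const hB]
  refine squeeze_zero_norm (fun n => (hid n ▸ norm_avgC_le_avg_norm i (E n))) ?_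
  have hlim := tendsto_integral_of_dominated_convergence (μ := μ.restrict (B i))
    (F := fun n k => ‖E n k‖) (f := fun _ => 0) (fun _ => 2 * C)
    (fun n => (stronglyMeasurable_const.sub (hFm n)).norm.aestronglyMeasurable)
    (integrableOn_const (hB.measure_lt_top i).ne)
    (fun n => ae_of_all _ fun k => by rw [norm_norm]; exact hEb n k)
    (ae_of_all _ fun k => by
      have hcomm : (fun t => u (t + k)) = fun t => u (k + t) := funext fun t => by rw [add_comm]
      simpa only [E, hcomm, norm_zero] using (tendsto_avgC_sub_avgC_add_left hB k hu hC).norm)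
  simpa only [avg, integral_zero, mul_zero] using hlim.const_mul (μ (B i)).toReal⁻¹

end Averages

section FourierAvg

variable {G : Type*} [AddCommGroup G] [MeasurableSpace G] {μ : Measure G} {B : ℕ → Set G}
  {X : Type*} [TopologicalSpace X] [AddAction G X]

def fourierAvg (μ : Measure G) (B : ℕ → Set G) (n : ℕ) (f : C(X, ℂ)) (χ : G → ℂ) (y : X) : ℂ :=
  avgC μ B n fun t => f (t +ᵥ y) * conj (χ t)

lemma avgC_orbit_mul_conj_add [TopologicalSpace G] {χ : G → ℂ} (hχ : IsChar χ) (i : ℕ)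
    (f : C(X, ℂ)) (x : X) (t : G) :
    (avgC μ B i fun k => f ((t + k) +ᵥ x) * conj (χ (t + k))) =
      conj (χ t) * fourierAvg μ B i f χ (t +ᵥ x) := by
  rw [fourierAvg, ← avgC_const_mul]
  congr 1
  funext k
  rw [add_comm t k, add_vadd, hχ.map_add, map_mul]
  ring

variable [MeasurableSpace X] {m : Measure X}

lemma IsGeneric.tendsto_avg {x : X} (hx : IsGeneric μ B m x) (g : C(X, ℝ)) :
    Tendsto (fun n => avg μ B n fun t => g (t +ᵥ x)) atTop (𝓝 (∫ y, g y ∂m)) := by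
  have := (Complex.continuous_re.tendsto _).comp
    (hx ⟨fun y => (g y : ℂ), Complex.continuous_ofReal.comp g.continuous⟩)
  simpa only [Function.comp_def, ContinuousMap.coe_mk, avgC_ofReal, integral_complex_ofReal,
    Complex.ofReal_re] using this

end FourierAvg

section Orbits

variable {G : Type*} [AddCommGroup G] [TopologicalSpace G] {X : Type*} [TopologicalSpace X]
  [AddAction G X] [ContinuousVAdd G X]

lemma continuous_orbit (f : C(X, ℂ)) (x : X) : Continuous fun t : G => f (t +ᵥ x) :=
  f.continuous.comp (continuous_id.vadd continuous_const)

lemma translateCM_apply_vadd (t s : G) (f : C(X, ℂ)) (x : X) :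
    f (s +ᵥ (t +ᵥ x)) = translateCM t f (s +ᵥ x) := by
  change f (s +ᵥ (t +ᵥ x)) = f (t +ᵥ (s +ᵥ x))
  rw [vadd_vadd, vadd_vadd, add_comm]

variable [MeasurableSpace G] {μ : Measure G} {B : ℕ → Set G}

lemma BesicovitchAPPoint.vadd {x : X} (hx : BesicovitchAPPoint μ B x) (t : G) :
    BesicovitchAPPoint μ B (t +ᵥ x) := by
  intro f
  simpa only [translateCM_apply_vadd] using hx (translateCM t f)

variable [MeasurableSpace X] [BorelSpace X] {m : Measure X}

lemma IsGeneric.vadd (hinv : InvariantMeasure G m) {x : X} (hx : IsGeneric μ B m x) (t : G) :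
    IsGeneric μ B m (t +ᵥ x) := by
  intro f
  have hint : ∫ y, translateCM t f y ∂m = ∫ y, f y ∂m :=
    (hinv t).integral_comp (Homeomorph.vadd t).measurableEmbedding f
  simpa only [translateCM_apply_vadd, hint] using hx (translateCM t f)

def spectralWeight (μ : Measure G) (B : ℕ → Set G) (m : Measure X) (n : ℕ) (f : C(X, ℂ))
    (χ : G → ℂ) : ℝ :=
  ∫ y, ‖fourierAvg μ B n f χ y‖ ^ 2 ∂m

def spectralSupport (μ : Measure G) (B : ℕ → Set G) (m : Measure X) (f : C(X, ℂ)) :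
    Set (G → ℂ) :=
  {χ | IsChar χ ∧ 0 < liminf (fun n => spectralWeight μ B m n f χ) atTop}

end Orbits

section Measurability

variable {G : Type*} [AddCommGroup G] [TopologicalSpace G] [MeasurableSpace G] [BorelSpace G]
  {μ : Measure G} [μ.IsAddHaarMeasure] {B : ℕ → Set G}
  {X : Type*} [MetricSpace X] [CompactSpace X] [AddAction G X] [ContinuousVAdd G X]

lemma lipschitzWith_avgC_orbit (hB : IsFolner μ B) (n : ℕ) (x : X) :
    LipschitzWith 1 fun f : C(X, ℂ) => avgC μ B n fun t => f (t +ᵥ x) := by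
  refine LipschitzWith.of_dist_le_mul fun f g => ?_
  rw [NNReal.coe_one, one_mul, dist_eq_norm, dist_eq_norm, ← avgC_sub n
    (hB.integrableOn n (continuous_orbit f x)) (hB.integrableOn n (continuous_orbit g x))]
  exact norm_avgC_le hB n (by fun_prop) fun t => (f - g).norm_coe_le_norm (t +ᵥ x)

lemma BesicovitchAPPoint.of_dense (hB : IsFolner μ B) {D : Set C(X, ℂ)} (hD : Dense D) {x : X}
    (h : ∀ f ∈ D, BesicovitchAPFun μ B fun t => f (t +ᵥ x)) : BesicovitchAPPoint μ B x := by
  intro g ε hε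
  obtain ⟨f, hfD, hgf⟩ := hD.exists_dist_lt g (half_pos hε)
  obtain ⟨k, ξ, c, hξ, hf⟩ := h f hfD (ε / 2) (half_pos hε)
  refine ⟨k, ξ, c, hξ, ?_⟩
  have hP := continuous_sum_mul_chars hξ c
  calc _ ≤ 1 * upperMean μ B (fun t => ‖f (t +ᵥ x) - ∑ j, c j * ξ j t‖) + ε / 2 :=
        upperMean_le_mul_add hB (h := fun t => ‖g (t +ᵥ x) - ∑ j, c j * ξ j t‖)
          (g := fun t => ‖f (t +ᵥ x) - ∑ j, c j * ξ j t‖) zero_le_one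
          ((continuous_orbit g x).sub hP).norm ((continuous_orbit f x).sub hP).norm
          (fun _ => norm_nonneg _) (fun t => (norm_sub_le _ _).trans
            (add_le_add (f.norm_coe_le_norm _) (norm_sum_mul_chars_le hξ c t))) fun t => by
          have hgf' := (ContinuousMap.dist_apply_le_dist (f := g) (g := f) (t +ᵥ x)).trans hgf.le
          rw [dist_eq_norm] at hgf'
          linarith [norm_sub_le_norm_sub_add_norm_sub (g (t +ᵥ x)) (f (t +ᵥ x)) (∑ j, c j * ξ j t)]
    _ < ε := by linarith

lemma continuous_fourierAvg (hB : IsFolner μ B) (n : ℕ) (f : C(X, ℂ)) {χ : G → ℂ}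
    (hχ : Continuous χ) : Continuous (fourierAvg μ B n f χ) :=
  continuous_avgC_param hB n (F := fun t y => f (t +ᵥ y) * conj (χ t)) (by fun_prop)

lemma norm_fourierAvg_le (hB : IsFolner μ B) (n : ℕ) (f : C(X, ℂ)) {χ : G → ℂ} (hχ : IsChar χ)
    (y : X) : ‖fourierAvg μ B n f χ y‖ ≤ ‖f‖ :=
  norm_avgC_le hB n ((continuous_orbit f y).mul (Complex.continuous_conj.comp hχ.continuous))
    fun t => by
      rw [norm_mul, Complex.norm_conj, hχ.norm_eq_one, mul_one]
      exact f.norm_coe_le_norm _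

variable [MeasurableSpace X] {m : Measure X}

lemma IsGeneric.tendsto_avg_fourierAvg_sq (hB : IsFolner μ B) {x : X}
    (hx : IsGeneric μ B m x) (i : ℕ) (f : C(X, ℂ)) {χ : G → ℂ} (hχ : Continuous χ) :
    Tendsto (fun n => avg μ B n fun t => ‖fourierAvg μ B i f χ (t +ᵥ x)‖ ^ 2) atTop
      (𝓝 (spectralWeight μ B m i f χ)) :=
  hx.tendsto_avg ⟨_, (continuous_fourierAvg hB i f hχ).norm.pow 2⟩

lemma spectralWeight_le [IsProbabilityMeasure m] (hB : IsFolner μ B) (n : ℕ) (f : C(X, ℂ))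
    {χ : G → ℂ} (hχ : IsChar χ) :
    spectralWeight μ B m n f χ ≤ ‖f‖ ^ 2 := by
  unfold spectralWeight
  simpa using integral_mono_of_nonneg (ae_of_all _ fun _ => by positivity)
    (integrable_const (‖f‖ ^ 2)) (ae_of_all m fun y => pow_le_pow_left₀ (norm_nonneg _)
      (norm_fourierAvg_le hB n f hχ y) 2)

variable [BorelSpace X]

lemma stronglyMeasurable_orbit_mul_conj_add {χ : G → ℂ} (hχ : IsChar χ) (f : C(X, ℂ))
    (x : X) :
    StronglyMeasurable fun p : G × G => f ((p.1 + p.2) +ᵥ x) * conj (χ (p.1 + p.2)) := by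
  have hχ' := hχ.star.continuous.stronglyMeasurable
  have hf : StronglyMeasurable fun p : G × G => f (p.2 +ᵥ (p.1 +ᵥ x)) :=
    (f.continuous.comp continuous_vadd).stronglyMeasurable.comp_measurable
      (measurable_snd.prodMk ((continuous_id.vadd continuous_const).measurable.comp measurable_fst))
  have heq : (fun p : G × G => f ((p.1 + p.2) +ᵥ x) * conj (χ (p.1 + p.2))) =
      fun p => f (p.2 +ᵥ (p.1 +ᵥ x)) * (conj (χ p.1) * conj (χ p.2)) :=
    funext fun p => by rw [hχ.map_add, map_mul, add_comm p.1 p.2, add_vadd]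
  rw [heq]
  exact hf.mul ((hχ'.comp_measurable measurable_fst).mul (hχ'.comp_measurable measurable_snd))

lemma measurableSet_setOf_besicovitchApproxBy (hB : IsFolner μ B) (f : C(X, ℂ))
    {S : Set (G → ℂ)} (hS : S.Countable) (hSc : ∀ χ ∈ S, IsChar χ) :
    MeasurableSet {x : X | BesicovitchApproxBy μ B S fun t => f (t +ᵥ x)} := by
  choose D hDc hDd using fun k : ℕ => TopologicalSpace.exists_countable_dense (Fin k → ℂ)
  have : Countable S := hS.to_subtype
  set A : ∀ k, (Fin k → S) → (Fin k → ℂ) → ℝ → Set X := fun k ξ c q =>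
    {x | upperMean μ B (fun t => ‖f (t +ᵥ x) - ∑ j, c j * (ξ j : G → ℂ) t‖) < q}
  have hA : ∀ k ξ c q, MeasurableSet (A k ξ c q) := fun k ξ c q =>
    measurableSet_lt (Measurable.limsup fun n => (continuous_avg_param hB n
      (F := fun t x => ‖f (t +ᵥ x) - ∑ j, c j * (ξ j : G → ℂ) t‖)
      ((f.continuous.comp continuous_vadd).sub ((continuous_sum_mul_chars
        (fun j => hSc _ (ξ j).2) c).comp continuous_fst)).norm).measurable) measurable_const
  have heq : {x : X | BesicovitchApproxBy μ B S fun t => f (t +ᵥ x)} =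
      ⋂ q : ℕ, ⋃ k, ⋃ ξ : Fin k → S, ⋃ c ∈ D k, A k ξ c (1 / (q + 1)) := by
    ext x
    simp only [mem_iInter, mem_iUnion]
    constructor
    · intro hx q
      obtain ⟨k, ξ, c, hξS, hlt⟩ := hx _ Nat.one_div_pos_of_nat
      obtain ⟨c', hc'D, hc'⟩ := exists_mem_upperMean_norm_sub_sum_lt hB (continuous_orbit f x)
        (fun t => f.norm_coe_le_norm (t +ᵥ x)) (fun j => hSc _ (hξS j)) (hDd k) hlt
      exact ⟨k, fun j => ⟨ξ j, hξS j⟩, c', hc'D, hc'⟩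
    · intro hx ε hε
      obtain ⟨q, hq⟩ := exists_nat_one_div_lt hε
      obtain ⟨k, ξ, c, -, hlt⟩ := hx q
      exact ⟨k, fun j => ξ j, c, fun j => (ξ j).2, hlt.trans hq⟩
  rw [heq]
  exact .iInter fun q => .iUnion fun k => .iUnion fun ξ => .biUnion (hDc k) fun c _ => hA k ξ c _

variable [IsProbabilityMeasure m]

lemma integrable_continuousMap {E : Type*} [NormedAddCommGroup E] (f : C(X, E)) :
    Integrable f m :=
  .of_bound f.continuous.aestronglyMeasurable ‖f‖ (ae_of_all _ f.norm_coe_le_norm)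

lemma lipschitzWith_integral : LipschitzWith 1 fun f : C(X, ℂ) => ∫ y, f y ∂m := by
  refine LipschitzWith.of_dist_le_mul fun f g => ?_
  rw [NNReal.coe_one, one_mul, dist_eq_norm, dist_eq_norm,
    ← integral_sub (integrable_continuousMap f) (integrable_continuousMap g)]
  simpa using norm_integral_le_of_norm_le_const (μ := m)
    (ae_of_all _ fun y => (f - g).norm_coe_le_norm y)

lemma IsGeneric.of_dense (hB : IsFolner μ B) {D : Set C(X, ℂ)} (hD : Dense D) {x : X}
    (h : ∀ f ∈ D, Tendsto (fun n => avgC μ B n fun t => f (t +ᵥ x)) atTop (𝓝 (∫ y, f y ∂m))) :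
    IsGeneric μ B m x := by
  have hclosed := (LipschitzWith.uniformEquicontinuous _ 1 fun n =>
    lipschitzWith_avgC_orbit hB n x).equicontinuous.isClosed_setOfPred_tendsto
      (l := atTop) (lipschitzWith_integral (m := m)).continuous
  exact fun f => hclosed.closure_subset_iff.2 h (hD f)

lemma measurableSet_setOf_isGeneric (hB : IsFolner μ B) :
    MeasurableSet {x : X | IsGeneric μ B m x} := by
  obtain ⟨D, hDc, hDd⟩ := TopologicalSpace.exists_countable_dense C(X, ℂ)
  have heq : {x : X | IsGeneric μ B m x} = ⋂ f ∈ D,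
      {x | Tendsto (fun n => avgC μ B n fun t => f (t +ᵥ x)) atTop (𝓝 (∫ y, f y ∂m))} :=
    Set.ext fun x => ⟨fun hx => mem_iInter₂.2 fun f _ => hx f,
      fun hx => IsGeneric.of_dense hB hDd fun f hf => mem_iInter₂.1 hx f hf⟩
  rw [heq]
  exact .biInter hDc fun f _ => measurableSet_tendsto _ fun n =>
    (continuous_avgC_param hB n (F := fun t y => f (t +ᵥ y)) (by fun_prop)).measurable

end Measurability

section Spectral

variable {G : Type*} [AddCommGroup G] [TopologicalSpace G] [IsTopologicalAddGroup G]
  [MeasurableSpace G] [BorelSpace G] {μ : Measure G} [μ.IsAddHaarMeasure] {B : ℕ → Set G}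
  {X : Type*} [MetricSpace X] [CompactSpace X] [MeasurableSpace X] [BorelSpace X]
  [AddAction G X] [ContinuousVAdd G X] {m : Measure X}

-- By the Følner property `⨍_{B n} f_x χ̄` is close to `⨍_{B n} χ̄ · (fourierAvg i f χ)_x`, whose
-- modulus is controlled by the mean square of `(fourierAvg i f χ)_x`, which tends to `W_i(f, χ)`.
lemma IsGeneric.limsup_norm_fourierAvg_le (hB : IsFolner μ B) {x : X} (hx : IsGeneric μ B m x)
    (f : C(X, ℂ)) {χ : G → ℂ} (hχ : IsChar χ) (i : ℕ) {r : ℝ} (hr : 0 < r) :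
    limsup (fun n => ‖fourierAvg μ B n f χ x‖) atTop ≤
      (2 * r)⁻¹ * spectralWeight μ B m i f χ + r / 2 := by
  set u : G → ℂ := fun s => f (s +ᵥ x) * conj (χ s)
  set V : G → ℂ := fun t => fourierAvg μ B i f χ (t +ᵥ x)
  have hu : Continuous u := (continuous_orbit f x).mul (Complex.continuous_conj.comp hχ.continuous)
  have hV : Continuous V :=
    (continuous_fourierAvg hB i f hχ.continuous).comp (continuous_id.vadd continuous_const)
  have hconv := tendsto_avgC_sub_avgC_avgC_add hB i hu (C := ‖f‖) (fun s => by
      rw [norm_mul, Complex.norm_conj, hχ.norm_eq_one, mul_one]; exact f.norm_coe_le_norm _)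
    (stronglyMeasurable_orbit_mul_conj_add hχ f x)
  simp only [u, avgC_orbit_mul_conj_add hχ] at hconv
  have hw := hconv.norm.add_const (r / 2)
  rw [norm_zero, zero_add] at hw
  have hχc := hχ.continuous
  refine (limsup_le_mul_limsup_add (a := (2 * r)⁻¹)
    (v := fun n => avg μ B n fun t => ‖V t‖ ^ 2)
    (w := fun n => ‖fourierAvg μ B n f χ x - avgC μ B n fun t => conj (χ t) * V t‖ + r / 2)
    (by positivity) (isBoundedUnder_of ⟨0, fun n => norm_nonneg _⟩).isCoboundedUnder_flip
    (isBoundedUnder_of ⟨‖f‖ ^ 2, fun n => avg_le_of_le hB n (by fun_prop) fun t =>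
      pow_le_pow_left₀ (norm_nonneg _) (norm_fourierAvg_le hB i f hχ _) 2⟩)
    hw fun n => ?_).trans_eq
    (by rw [(hx.tendsto_avg_fourierAvg_sq hB i f hχ.continuous).limsup_eq])
  have hw : ‖avgC μ B n fun t => conj (χ t) * V t‖ ≤ (2 * r)⁻¹ * avg μ B n (fun t => ‖V t‖ ^ 2)
      + r / 2 :=
    (norm_avgC_le_avg_norm n _).trans <| avg_le_mul_avg_add hB n (by fun_prop) (by fun_prop)
      fun t => by
        rw [norm_mul, Complex.norm_conj, hχ.norm_eq_one, one_mul]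
        exact le_inv_mul_sq_add hr
  have := norm_sub_norm_le (fourierAvg μ B n f χ x) (avgC μ B n fun t => conj (χ t) * V t)
  simp only [fourierAvg] at this ⊢
  linarith

variable [IsProbabilityMeasure m]

lemma IsGeneric.tendsto_fourierAvg_of_not_mem (hB : IsFolner μ B) {x : X}
    (hx : IsGeneric μ B m x) (f : C(X, ℂ)) {χ : G → ℂ} (hχ : IsChar χ)
    (hS : χ ∉ spectralSupport μ B m f) :
    Tendsto (fun n => fourierAvg μ B n f χ x) atTop (𝓝 0) := by
  have hW : liminf (fun i => spectralWeight μ B m i f χ) atTop ≤ 0 :=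
    not_lt.1 fun h => hS ⟨hχ, h⟩
  have hbdd : IsBoundedUnder (· ≤ ·) atTop fun n => ‖fourierAvg μ B n f χ x‖ :=
    isBoundedUnder_of ⟨‖f‖, fun n => norm_fourierAvg_le hB n f hχ x⟩
  have hlim : limsup (fun n => ‖fourierAvg μ B n f χ x‖) atTop ≤ 0 := by
    refine le_of_forall_pos_le_add fun ε hε => ?_
    obtain ⟨i, hi⟩ := (frequently_lt_of_liminf_lt (isBoundedUnder_of ⟨‖f‖ ^ 2, fun i =>
      spectralWeight_le hB i f hχ⟩).isCoboundedUnder_flip (hW.trans_lt (by positivity :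
        (0 : ℝ) < ε ^ 2))).exists
    calc _ ≤ (2 * ε)⁻¹ * spectralWeight μ B m i f χ + ε / 2 :=
          hx.limsup_norm_fourierAvg_le hB f hχ i hε
      _ ≤ (2 * ε)⁻¹ * ε ^ 2 + ε / 2 := by gcongr
      _ = 0 + ε := by field_simp; ring
  rw [tendsto_zero_iff_norm_tendsto_zero]
  exact tendsto_of_le_liminf_of_limsup_le (le_liminf_of_le hbdd.isCoboundedUnder_flip
    (.of_forall fun n => norm_nonneg _)) hlim hbdd
    (isBoundedUnder_of ⟨0, fun n => norm_nonneg _⟩)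

lemma eventually_sum_spectralWeight_le (hB : IsFolner μ B) (f : C(X, ℂ))
    {T : Finset (G → ℂ)} (hT : ∀ χ ∈ T, IsChar χ) :
    ∀ᶠ i in atTop, ∑ χ ∈ T, spectralWeight μ B m i f χ ≤ ‖f‖ ^ 2 + 1 := by
  classical
  set κ : ℝ := ((T.card : ℝ) ^ 2 * ‖f‖ ^ 2 + 1)⁻¹
  have hκ : 0 < κ := by positivity
  have horth : ∀ᶠ i in atTop, ∀ χ ∈ T, ∀ η ∈ T, χ ≠ η →
      ‖avgC μ B i fun t => χ t * conj (η t)‖ ≤ κ := by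
    simp only [eventually_all_finset]
    intro χ hχ η hη
    by_cases hne : χ = η
    · exact .of_forall fun _ h => absurd hne h
    · have h := (tendsto_avgC_mul_conj hB (hT χ hχ) (hT η hη)).norm
      rw [if_neg hne, norm_zero] at h
      exact (h.eventually (ge_mem_nhds hκ)).mono fun i hi _ => hi
  filter_upwards [horth] with i hi
  have hint : ∀ χ ∈ T, Integrable (fun y => ‖fourierAvg μ B i f χ y‖ ^ 2) m := fun χ hχ =>
    integrable_continuousMap ⟨_, (continuous_fourierAvg hB i f (hT χ hχ).continuous).norm.pow 2⟩
  have hκ1 : (T.card : ℝ) ^ 2 * ‖f‖ ^ 2 * κ ≤ 1 := by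
    rw [← div_eq_mul_inv, div_le_one (by positivity)]
    linarith
  simp only [spectralWeight]
  rw [← integral_finsetSum T hint]
  refine (integral_mono (integrable_finsetSum T hint) (integrable_const (‖f‖ ^ 2 + 1))
    fun y => ?_).trans_eq (by simp)
  exact (sum_norm_avgC_mul_conj_sq_le hB i (h := fun t => f (t +ᵥ y)) (continuous_orbit f y)
    (fun t => f.norm_coe_le_norm _) hT hκ.le hi).trans (by linarith)

lemma finite_setOf_le_liminf_spectralWeight (hB : IsFolner μ B) (f : C(X, ℂ)) {δ : ℝ}
    (hδ : 0 < δ) :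
    {χ : G → ℂ | IsChar χ ∧ δ ≤ liminf (fun i => spectralWeight μ B m i f χ) atTop}.Finite := by
  by_contra hinf
  obtain ⟨T, hTsub, hTcard⟩ :=
    Set.Infinite.exists_subset_card_eq hinf (⌈2 * (‖f‖ ^ 2 + 1) / δ⌉₊ + 1)
  have hlarge : ∀ᶠ i in atTop, ∀ χ ∈ T, δ / 2 < spectralWeight μ B m i f χ := by
    simp only [eventually_all_finset]
    exact fun χ hχ => eventually_lt_of_lt_liminf ((half_lt_self hδ).trans_le (hTsub hχ).2)
      (isBoundedUnder_of ⟨0, fun i => integral_nonneg fun _ => by positivity⟩)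
  obtain ⟨i, hi, hsum⟩ :=
    (hlarge.and (eventually_sum_spectralWeight_le (m := m) hB f fun χ hχ => (hTsub hχ).1)).exists
  have hcard := (Finset.card_nsmul_le_sum T _ _ fun χ hχ => (hi χ hχ).le).trans hsum
  rw [nsmul_eq_mul, hTcard] at hcard
  push_cast at hcard
  have hceil := Nat.le_ceil (2 * (‖f‖ ^ 2 + 1) / δ)
  have : 2 * (‖f‖ ^ 2 + 1) / δ * (δ / 2) = ‖f‖ ^ 2 + 1 := by field_simp
  nlinarith

lemma countable_spectralSupport (hB : IsFolner μ B) (f : C(X, ℂ)) :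
    (spectralSupport μ B m f).Countable := by
  refine (countable_iUnion fun k : ℕ =>
    (finite_setOf_le_liminf_spectralWeight (m := m) hB f
      (Nat.one_div_pos_of_nat (n := k))).countable).mono
    fun χ hχ => mem_iUnion.2 ?_
  obtain ⟨k, hk⟩ := exists_nat_one_div_lt hχ.2
  exact ⟨k, hχ.1, hk.le⟩

lemma IsGeneric.tendsto_avgC_sub_trigPoly_mul_conj (hB : IsFolner μ B) {x : X}
    (hx : IsGeneric μ B m x) (f : C(X, ℂ)) {T : Finset (G → ℂ)} (hT : ∀ χ ∈ T, IsChar χ)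
    (d : (G → ℂ) → ℂ) [DecidablePred (· ∈ spectralSupport μ B m f)] :
    Tendsto (fun n => avgC μ B n fun t => (f (t +ᵥ x) - trigPoly T d t) *
        conj (trigPoly (T.filter (· ∉ spectralSupport μ B m f)) d t)) atTop
      (𝓝 (-∑ χ ∈ T.filter (· ∉ spectralSupport μ B m f), (‖d χ‖ ^ 2 : ℂ))) := by
  set Tb := T.filter (· ∉ spectralSupport μ B m f)
  have hTb : ∀ χ ∈ Tb, IsChar χ := fun χ hχ => hT χ (Finset.filter_subset _ _ hχ)
  have hF : Continuous fun t : G => f (t +ᵥ x) := continuous_orbit f x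
  have hFR : Tendsto (fun n => avgC μ B n fun t => f (t +ᵥ x) * conj (trigPoly Tb d t)) atTop
      (𝓝 0) := by
    have := tendsto_finsetSum Tb fun χ hχ => (hx.tendsto_fourierAvg_of_not_mem hB f
      (hTb χ hχ) (Finset.mem_filter.1 hχ).2).const_mul (conj (d χ))
    simp only [mul_zero, Finset.sum_const_zero] at this
    simp only [avgC_mul_conj_trigPoly hB hTb d hF]
    exact this
  have hsplit : ∀ n, (avgC μ B n fun t => (f (t +ᵥ x) - trigPoly T d t) * conj (trigPoly Tb d t)) =
      (avgC μ B n fun t => f (t +ᵥ x) * conj (trigPoly Tb d t)) -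
        avgC μ B n fun t => trigPoly T d t * conj (trigPoly Tb d t) := fun n => by
    have := continuous_trigPoly hT d
    have := continuous_trigPoly hTb d
    rw [← avgC_sub n (hB.integrableOn n (by fun_prop)) (hB.integrableOn n (by fun_prop))]
    simp only [sub_mul]
  simpa only [hsplit, zero_sub] using
    hFR.sub (tendsto_avgC_trigPoly_mul_conj hB hT (Finset.filter_subset _ T) d)

-- Write `f_x - Q = (f_x - P) + R` with `R` the discarded part of `P`. The cross term
-- `2 Re ((f_x - P) R̄)` averages to `-2 ∑ ‖d_χ‖²` over the discarded `χ`, as the Fourier–Bohr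
-- coefficients of `f_x` vanish there, while `‖R‖²` averages to `∑ ‖d_χ‖²`.
lemma IsGeneric.upperMean_sq_le_of_filter_spectralSupport (hB : IsFolner μ B) {x : X}
    (hx : IsGeneric μ B m x) (f : C(X, ℂ)) {T : Finset (G → ℂ)} (hT : ∀ χ ∈ T, IsChar χ)
    (d : (G → ℂ) → ℂ) {K : ℝ} (hK : ∀ t, ‖f (t +ᵥ x) - trigPoly T d t‖ ≤ K)
    [DecidablePred (· ∈ spectralSupport μ B m f)] :
    upperMean μ B (fun t =>
        ‖f (t +ᵥ x) - trigPoly (T.filter (· ∈ spectralSupport μ B m f)) d t‖ ^ 2) ≤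
      K * upperMean μ B (fun t => ‖f (t +ᵥ x) - trigPoly T d t‖) := by
  set P := trigPoly T d
  set Tb := T.filter (· ∉ spectralSupport μ B m f)
  set R := trigPoly Tb d
  set rr : ℝ := ∑ χ ∈ Tb, ‖d χ‖ ^ 2
  have hF : Continuous fun t : G => f (t +ᵥ x) := continuous_orbit f x
  have hTb : ∀ χ ∈ Tb, IsChar χ := fun χ hχ => hT χ (Finset.filter_subset _ _ hχ)
  have hP : Continuous P := continuous_trigPoly hT d
  have hR : Continuous R := continuous_trigPoly hTb d
  have hsplit : ∀ t, f (t +ᵥ x) - trigPoly (T.filter (· ∈ spectralSupport μ B m f)) d t =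
      (f (t +ᵥ x) - P t) + R t := fun t => by
    simp only [P, R, Tb, trigPoly]
    rw [← Finset.sum_filter_add_sum_filter_not T (· ∈ spectralSupport μ B m f)]
    ring
  have hw := tendsto_avg_two_re_mul_conj_add_norm_sq hB (a := fun t => f (t +ᵥ x) - P t)
    (hF.sub hP) hR
    (hx.tendsto_avgC_sub_trigPoly_mul_conj hB f hT d)
    (tendsto_avgC_trigPoly_mul_conj hB hTb (subset_refl Tb) d)
  rw [show 2 * (-∑ χ ∈ Tb, (‖d χ‖ ^ 2 : ℂ)).re + (∑ χ ∈ Tb, (‖d χ‖ ^ 2 : ℂ)).re = -rr by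
    simp only [rr, Complex.neg_re, Complex.re_sum, ← Complex.ofReal_pow, Complex.ofReal_re]
    ring] at hw
  have hK0 : 0 ≤ K := (norm_nonneg _).trans (hK 0)
  have hrr0 : 0 ≤ rr := Finset.sum_nonneg fun _ _ => by positivity
  simp only [hsplit]
  refine (limsup_le_mul_limsup_add (a := K) (v := fun n => avg μ B n fun t => ‖f (t +ᵥ x) - P t‖)
    hK0 (isBoundedUnder_of ⟨0, fun n => avg_nonneg n fun t => by positivity⟩).isCoboundedUnder_flip
    (isBoundedUnder_of ⟨K, fun n => avg_le_of_le hB n (by fun_prop) hK⟩) hw fun n => ?_).trans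
    (by unfold upperMean; linarith)
  refine avg_le_mul_avg_add_avg hB n (by fun_prop) (by fun_prop) (by fun_prop) fun t => ?_
  have hsq := Complex.normSq_add (f (t +ᵥ x) - P t) (R t)
  simp only [← Complex.sq_norm] at hsq
  nlinarith [hK t, norm_nonneg (f (t +ᵥ x) - P t)]

lemma IsGeneric.exists_trigPoly_approx_spectralSupport (hB : IsFolner μ B) {x : X}
    (hx : IsGeneric μ B m x) (f : C(X, ℂ)) (hbes : BesicovitchAPFun μ B fun t => f (t +ᵥ x))
    {q : ℝ} (hq : 0 < q) : ∃ (T : Finset (G → ℂ)) (d : (G → ℂ) → ℂ),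
      ↑T ⊆ spectralSupport μ B m f ∧
        upperMean μ B (fun t => ‖f (t +ᵥ x) - trigPoly T d t‖) < q := by
  classical
  set C := ‖f‖ + 1
  have hC : 0 < C := by positivity
  set ε := min C (q ^ 2 / (24 * C))
  have hε : 0 < ε := lt_min hC (by positivity)
  obtain ⟨T, d, hT, hbound, hmean⟩ := hbes.exists_trigPoly_approx hB (continuous_orbit f x)
    (fun t => (f.norm_coe_le_norm _).trans (le_add_of_nonneg_right zero_le_one)) hε
    (min_le_left _ _)
  set Tg := T.filter (· ∈ spectralSupport μ B m f)
  have hTg : ∀ χ ∈ Tg, IsChar χ := fun χ hχ => hT χ (Finset.filter_subset _ _ hχ)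
  have hg : Continuous fun t : G => f (t +ᵥ x) - trigPoly Tg d t :=
    (continuous_orbit f x).sub (continuous_trigPoly hTg d)
  refine ⟨Tg, d, fun χ hχ => (Finset.mem_filter.1 hχ).2, ?_⟩
  have hsq := (hx.upperMean_sq_le_of_filter_spectralSupport hB f hT d hbound).trans
    (mul_le_mul_of_nonneg_left hmean (by positivity))
  have h9 : 3 * C * (3 * ε) ≤ q * (3 * q / 8) :=
    calc 3 * C * (3 * ε) = 9 * C * ε := by ring
      _ ≤ 9 * C * (q ^ 2 / (24 * C)) := by gcongr; exact min_le_right _ _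
      _ = q * (3 * q / 8) := by field_simp; ring
  calc _ ≤ (2 * (q / 2))⁻¹ * upperMean μ B (fun t => ‖f (t +ᵥ x) - trigPoly Tg d t‖ ^ 2) +
        q / 2 / 2 :=
        upperMean_le_mul_add hB (by positivity) hg.norm (hg.norm.pow 2) (fun _ => norm_nonneg _)
          (fun t => pow_le_pow_left₀ (norm_nonneg _) ((norm_sub_le _ _).trans
            (add_le_add (f.norm_coe_le_norm _) (norm_trigPoly_le hTg d t))) 2)
          fun t => le_inv_mul_sq_add (by positivity)
    _ ≤ q⁻¹ * (3 * C * (3 * ε)) + q / 4 := by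
        rw [show 2 * (q / 2) = q by ring, show q / 2 / 2 = q / 4 by ring]
        gcongr
    _ < q := by linarith [(inv_mul_le_iff₀ hq).2 h9]

lemma IsGeneric.besicovitchApproxBy_spectralSupport (hB : IsFolner μ B) {x : X}
    (hx : IsGeneric μ B m x) (f : C(X, ℂ)) (hbes : BesicovitchAPFun μ B fun t => f (t +ᵥ x)) :
    BesicovitchApproxBy μ B (spectralSupport μ B m f) fun t => f (t +ᵥ x) := fun ε hε => by
  obtain ⟨T, d, hT, hlt⟩ := hx.exists_trigPoly_approx_spectralSupport hB f hbes hε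
  refine ⟨T.card, fun j => T.equivFin.symm j, fun j => d (T.equivFin.symm j),
    fun j => hT (T.equivFin.symm j).2, ?_⟩
  simpa only [trigPoly_eq_sum_fin] using hlt

end Spectral

theorem statement_2_general
    {G : Type*} [AddCommGroup G] [TopologicalSpace G] [IsTopologicalAddGroup G]
    [MeasurableSpace G] [BorelSpace G]
    (μ : Measure G) [μ.IsAddHaarMeasure] (B : ℕ → Set G) (hB : IsFolner μ B)
    {X : Type*} [MetricSpace X] [CompactSpace X] [MeasurableSpace X] [BorelSpace X]
    [AddAction G X] [ContinuousVAdd G X]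
    (m : Measure X) [IsProbabilityMeasure m] (hinv : InvariantMeasure G m) :
    MeasurableSet {x : X | BesicovitchAPPoint μ B x ∧ IsGeneric μ B m x} ∧
    ∀ t : G, (fun x : X => t +ᵥ x) ⁻¹' {x : X | BesicovitchAPPoint μ B x ∧ IsGeneric μ B m x}
      = {x : X | BesicovitchAPPoint μ B x ∧ IsGeneric μ B m x} := by
  obtain ⟨D, hDc, hDd⟩ := TopologicalSpace.exists_countable_dense C(X, ℂ)
  set S : Set (G → ℂ) := ⋃ f ∈ D, spectralSupport μ B m f
  have hSc : ∀ χ ∈ S, IsChar χ := fun χ hχ => by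
    obtain ⟨f, -, hχf⟩ := mem_iUnion₂.1 hχ
    exact hχf.1
  have heq : {x : X | BesicovitchAPPoint μ B x ∧ IsGeneric μ B m x} =
      {x | IsGeneric μ B m x} ∩ ⋂ f ∈ D, {x | BesicovitchApproxBy μ B S fun t => f (t +ᵥ x)} :=
    Set.ext fun x => ⟨fun ⟨hbes, hgen⟩ => ⟨hgen, mem_iInter₂.2 fun f hf =>
        (hgen.besicovitchApproxBy_spectralSupport hB f (hbes f)).mono
          (subset_biUnion_of_mem (u := fun f => spectralSupport μ B m f) hf)⟩,
      fun ⟨hgen, happrox⟩ => ⟨BesicovitchAPPoint.of_dense hB hDd fun f hf =>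
        (mem_iInter₂.1 happrox f hf).besicovitchAPFun hSc, hgen⟩⟩
  refine ⟨heq ▸ (measurableSet_setOf_isGeneric hB).inter (.biInter hDc fun f _ =>
    measurableSet_setOf_besicovitchApproxBy hB f
      (hDc.biUnion fun f _ => countable_spectralSupport hB f) hSc), fun t => ?_⟩
  exact preimage_vadd_setOf_eq (fun t x hx => ⟨hx.1.vadd t, hx.2.vadd hinv t⟩) t

/-- The set of Besicovitch almost periodic points which are generic for `m`
is measurable and invariant. -/
theorem statement_2
    {G : Type*} [AddCommGroup G] [TopologicalSpace G] [IsTopologicalAddGroup G] [T2Space G]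
    [LocallyCompactSpace G] [SigmaCompactSpace G] [MeasurableSpace G] [BorelSpace G]
    (μ : Measure G) [μ.IsAddHaarMeasure] (B : ℕ → Set G) (hB : IsFolner μ B)
    {X : Type*} [MetricSpace X] [CompactSpace X] [MeasurableSpace X] [BorelSpace X]
    [AddAction G X] [ContinuousVAdd G X]
    (m : Measure X) [IsProbabilityMeasure m] (hinv : InvariantMeasure G m) :
    MeasurableSet {x : X | BesicovitchAPPoint μ B x ∧ IsGeneric μ B m x} ∧
    ∀ t : G, (fun x : X => t +ᵥ x) ⁻¹' {x : X | BesicovitchAPPoint μ B x ∧ IsGeneric μ B m x}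
      = {x : X | BesicovitchAPPoint μ B x ∧ IsGeneric μ B m x} :=
  statement_2_general μ B hB m hinv

end APPaper
end
end

section
/- Let (X,G) be a dynamical system over a σ-compact locally compact abelian group G and (B_n) a Følner sequence in G. If x ∈ X is Weyl almost periodic, then every point of the orbit closure of x is Weyl almost periodic. -/
open MeasureTheory Filter Topology Set Pointwise

noncomputable section

namespace APPaper

/-! For fixed `t`, the function `z ↦ D_N(z, t z)` is lower semicontinuous, being a supremum of
averages that depend continuously on `z` by dominated convergence, and it is constant along the
orbit of `x`, because Haar measure and the supremum over all translates of `B_N` are translation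
invariant. Hence `D_N(y, t y) ≤ D_N(x, t x)` on the orbit closure of `x`, so each set of
`ε`-almost periods of `x` consists of `ε`-almost periods of `y`. -/

theorem RelDense.mono {G : Type*} [AddCommGroup G] [TopologicalSpace G] {A A' : Set G}
    (h : A ⊆ A') (hA : RelDense A) : RelDense A' := by
  obtain ⟨K, hK, hcover⟩ := hA
  exact ⟨K, hK, fun g => (hcover g).imp fun _ ha => ⟨h ha.1, ha.2⟩⟩

theorem IsFolner.measure_ne_top {G : Type*} [AddCommGroup G] [TopologicalSpace G]
    [MeasurableSpace G] {μ : Measure G} [IsFiniteMeasureOnCompacts μ] {B : ℕ → Set G}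
    (hB : IsFolner μ B) (n : ℕ) : μ (B n) ≠ ⊤ :=
  ((measure_mono subset_closure).trans_lt (hB.relCompact n).measure_lt_top).ne

section Invariance

variable {G : Type*} [AddCommGroup G] [MeasurableSpace G] (μ : Measure G) [μ.IsAddLeftInvariant]
  (B : ℕ → Set G)

theorem avg_vadd_le_of_norm_le {n : ℕ} (hfin : μ (B n) ≠ ⊤) {h : G → ℝ} {C : ℝ}
    (hC : ∀ t, ‖h t‖ ≤ C) (u : G) :
    (μ (B n)).toReal⁻¹ * ∫ t in u +ᵥ B n, h t ∂μ ≤ C := by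
  have hC0 : 0 ≤ C := (norm_nonneg _).trans (hC 0)
  have hint : ∫ t in u +ᵥ B n, h t ∂μ ≤ C * (μ (B n)).toReal := by
    rw [← measure_vadd μ u (B n)] at hfin ⊢
    exact (le_abs_self _).trans
      (norm_setIntegral_le_of_norm_le_const hfin.lt_top fun t _ => hC t)
  calc (μ (B n)).toReal⁻¹ * ∫ t in u +ᵥ B n, h t ∂μ
      ≤ (μ (B n)).toReal⁻¹ * (C * (μ (B n)).toReal) := by gcongr
    _ = C * ((μ (B n)).toReal⁻¹ * (μ (B n)).toReal) := by ring
    _ ≤ C := mul_le_of_le_one_right hC0 inv_mul_le_one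

variable [MeasurableAdd G]

theorem setIntegral_vadd_comp_add_left (s : Set G) (h : G → ℝ) (r u : G) :
    ∫ t in u +ᵥ s, h (r + t) ∂μ = ∫ t in (r + u) +ᵥ s, h t ∂μ := by
  have hpre : (r + ·) ⁻¹' ((r + u) +ᵥ s) = u +ᵥ s := by
    ext t
    simp only [mem_preimage, mem_vadd_set_iff_neg_vadd_mem, vadd_eq_add]
    rw [show -(r + u) + (r + t) = -u + t by abel]
  rw [← hpre]
  exact (measurePreserving_add_left μ r).setIntegral_preimage_emb
    (MeasurableEquiv.addLeft r).measurableEmbedding h _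

theorem supAvg_comp_add_left (n : ℕ) (h : G → ℝ) (r : G) :
    supAvg μ B n (fun t => h (r + t)) = supAvg μ B n h := by
  simp only [supAvg, setIntegral_vadd_comp_add_left]
  exact (Equiv.addLeft r).surjective.iSup_comp
    fun u => (μ (B n)).toReal⁻¹ * ∫ t in u +ᵥ B n, h t ∂μ

theorem weylDist_vadd_vadd {X : Type*} [PseudoMetricSpace X] [AddAction G X] (n : ℕ)
    (r : G) (y z : X) : weylDist μ B n (r +ᵥ y) (r +ᵥ z) = weylDist μ B n y z := by
  simp only [weylDist, vadd_vadd]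
  simp_rw [add_comm _ r]
  exact supAvg_comp_add_left μ B n (fun t => dist (t +ᵥ y) (t +ᵥ z)) r

end Invariance

section Semicontinuity

variable {G : Type*} [AddCommGroup G] [TopologicalSpace G] [MeasurableSpace G]
  [OpensMeasurableSpace G] (μ : Measure G) [μ.IsAddLeftInvariant] (B : ℕ → Set G)
  {X : Type*} [PseudoMetricSpace X] [BoundedSpace X] [AddAction G X] [ContinuousVAdd G X]

theorem lowerSemicontinuous_weylDist {n : ℕ} (hfin : μ (B n) ≠ ⊤) :
    LowerSemicontinuous fun p : X × X => weylDist μ B n p.1 p.2 := by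
  have hbound : ∀ (p : X × X) (t : G),
      ‖dist (t +ᵥ p.1) (t +ᵥ p.2)‖ ≤ Metric.diam (univ : Set X) := fun p t => by
    rw [Real.norm_of_nonneg dist_nonneg]
    exact Metric.dist_le_diam_of_mem (Bornology.IsBounded.all _) (mem_univ _) (mem_univ _)
  have hcont : ∀ t : G, Continuous fun p : X × X => dist (t +ᵥ p.1) (t +ᵥ p.2) := fun t =>
    (continuous_const_vadd t |>.comp continuous_fst).dist
      (continuous_const_vadd t |>.comp continuous_snd)
  refine lowerSemicontinuous_ciSup
    (fun p => ⟨_, forall_mem_range.2 (avg_vadd_le_of_norm_le μ B hfin (hbound p))⟩)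
    fun u => (Continuous.const_mul ?_ _).lowerSemicontinuous
  have hfin' : μ (u +ᵥ B n) ≠ ⊤ := by rwa [measure_vadd]
  refine continuous_of_dominated (fun p => ?_) (fun p => ae_of_all _ (hbound p))
    (integrableOn_const hfin') (ae_of_all _ hcont)
  exact ((continuous_id.vadd continuous_const).dist
    (continuous_id.vadd continuous_const)).aestronglyMeasurable

theorem weylDist_le_of_mem_closure_orbitSet [MeasurableAdd G] {n : ℕ} (hfin : μ (B n) ≠ ⊤)
    {x y : X} (hy : y ∈ closure (orbitSet G x)) (t : G) :
    weylDist μ B n y (t +ᵥ y) ≤ weylDist μ B n x (t +ᵥ x) := by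
  have hclosed : IsClosed {z : X | weylDist μ B n z (t +ᵥ z) ≤ weylDist μ B n x (t +ᵥ x)} :=
    ((lowerSemicontinuous_weylDist μ B hfin).comp
      (continuous_id.prodMk (continuous_const_vadd t))).isClosed_preimage _
  refine closure_minimal ?_ hclosed hy
  rintro _ ⟨r, rfl⟩
  rw [mem_ofPred_eq, vadd_comm t r x, weylDist_vadd_vadd]

end Semicontinuity

theorem statement_10_general
    {G : Type*} [AddCommGroup G] [TopologicalSpace G] [IsTopologicalAddGroup G]
    [MeasurableSpace G] [BorelSpace G]
    (μ : Measure G) [μ.IsAddHaarMeasure] (B : ℕ → Set G) (hB : IsFolner μ B)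
    {X : Type*} [MetricSpace X] [CompactSpace X] [AddAction G X] [ContinuousVAdd G X]
    (x : X) (hx : WeylAPPoint μ B x) :
    ∀ y ∈ closure (orbitSet G x), WeylAPPoint μ B y := by
  intro y hy ε hε
  obtain ⟨N, hN⟩ := hx ε hε
  refine ⟨N, hN.mono fun t ht => ?_⟩
  exact (weylDist_le_of_mem_closure_orbitSet μ B (hB.measure_ne_top N) hy t).trans_lt ht

/-- Weyl almost periodicity propagates to the orbit closure. -/
theorem statement_10
    {G : Type*} [AddCommGroup G] [TopologicalSpace G] [IsTopologicalAddGroup G] [T2Space G]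
    [LocallyCompactSpace G] [SigmaCompactSpace G] [MeasurableSpace G] [BorelSpace G]
    (μ : Measure G) [μ.IsAddHaarMeasure] (B : ℕ → Set G) (hB : IsFolner μ B)
    {X : Type*} [MetricSpace X] [CompactSpace X] [AddAction G X] [ContinuousVAdd G X]
    (x : X) (hx : WeylAPPoint μ B x) :
    ∀ y ∈ closure (orbitSet G x), WeylAPPoint μ B y :=
  statement_10_general μ B hB x hx

end APPaper
end
end
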